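/- arXiv:2111.01842 — 4 statements merged into one kernel-verified Lean document; each statement's English description precedes it below -/
import Mathlib

section
/- Let K₀ = ⌈σ/(9 L̂ m γ)⌉. Then for all k ≥ 1 the sums A_k of the CLVR step sizes satisfy A_k ≥ k/(√2 L̂ m); and if σ > 0 and k > K₀ then in addition A_k ≥ (σ/((3√2 L̂ m)² γ)) · (k − K₀ + max{√(9√2 L̂ m γ / σ), 1})², so that A_k ≥ max of the two lower bounds. -/
set_option maxHeartbeats 4000000


/-- Growth of the CLVR step-size sums: with `a₁ = A₁ = 1/(√2 L̂ m)`,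
`a_{k+1} = √(1 + σA_k/γ)/(√2 L̂ m)`, `A_{k+1} = A_k + a_{k+1}` and
`K₀ = ⌈σ/(9 L̂ m γ)⌉`, we have `A_k ≥ k/(√2 L̂ m)` for all `k ≥ 1`, and additionally
`A_k ≥ (σ/((3√2 L̂ m)² γ)) (k − K₀ + max{√(9√2 L̂ m γ/σ), 1})²` when `σ > 0` and `k > K₀`. -/
theorem clvr_stepsize_growth
    (Lhat γ σ : ℝ) (m : ℕ) (hL : 0 < Lhat) (hγ : 0 < γ) (hσ : 0 ≤ σ) (hm : 1 ≤ m)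
    (a Aseq : ℕ → ℝ)
    (ha1 : a 1 = 1 / (Real.sqrt 2 * Lhat * m))
    (hA1 : Aseq 1 = a 1)
    (harec : ∀ k, 1 ≤ k →
      a (k + 1) = Real.sqrt (1 + σ * Aseq k / γ) / (Real.sqrt 2 * Lhat * m))
    (hArec : ∀ k, 1 ≤ k → Aseq (k + 1) = Aseq k + a (k + 1))
    (K0 : ℕ) (hK0 : K0 = ⌈σ / (9 * Lhat * m * γ)⌉₊) :
    ∀ k : ℕ, 1 ≤ k →
      (k : ℝ) / (Real.sqrt 2 * Lhat * m) ≤ Aseq k ∧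
      (0 < σ → K0 < k →
        σ / ((3 * Real.sqrt 2 * Lhat * m) ^ 2 * γ) *
            ((k : ℝ) - K0 + max (Real.sqrt (9 * Real.sqrt 2 * Lhat * m * γ / σ)) 1) ^ 2
          ≤ Aseq k) := by
  have hs2 : (0:ℝ) < Real.sqrt 2 := Real.sqrt_pos.mpr (by norm_num)
  have hs2sq : Real.sqrt 2 ^ 2 = 2 := Real.sq_sqrt (by norm_num)
  have hs2le : Real.sqrt 2 ≤ 2 := by nlinarith
  have hs2ge : (7/5:ℝ) ≤ Real.sqrt 2 := by nlinarith
  have hm' : (0:ℝ) < m := by exact_mod_cast Nat.lt_of_lt_of_le Nat.zero_lt_one hm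
  obtain ⟨c, hcdef⟩ : ∃ c : ℝ, c = Real.sqrt 2 * Lhat * m := ⟨_, rfl⟩
  have hc : 0 < c := by rw [hcdef]; positivity
  rw [← hcdef] at ha1 harec
  -- Part 1
  have P1 : ∀ k : ℕ, 1 ≤ k → (k : ℝ) / c ≤ Aseq k := by
    intro k hk
    induction k, hk using Nat.le_induction with
    | base => rw [hA1, ha1]; norm_num
    | succ k hk ih =>
      have hAk0 : 0 ≤ Aseq k := le_trans (by positivity) ih
      have h1 : (1:ℝ) ≤ Real.sqrt (1 + σ * Aseq k / γ) := by
        have h0 : (0:ℝ) ≤ σ * Aseq k / γ := by positivity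
        have := Real.sqrt_le_sqrt (show (1:ℝ) ≤ 1 + σ * Aseq k / γ by linarith)
        rwa [Real.sqrt_one] at this
      rw [hArec k hk, harec k hk]
      have hcast : ((k+1 : ℕ) : ℝ) / c = (k:ℝ)/c + 1/c := by push_cast; ring
      rw [hcast]
      gcongr
  -- Part 2
  have P2 : 0 < σ → ∀ k : ℕ, K0 < k →
      σ / ((3 * Real.sqrt 2 * Lhat * m) ^ 2 * γ) *
          ((k : ℝ) - K0 + max (Real.sqrt (9 * Real.sqrt 2 * Lhat * m * γ / σ)) 1) ^ 2
        ≤ Aseq k := by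
    intro hσp
    have hσne : σ ≠ 0 := hσp.ne'
    obtain ⟨t, htdef⟩ : ∃ t : ℝ, t = σ / (9 * c * γ) := ⟨_, rfl⟩
    have ht : 0 < t := by rw [htdef]; positivity
    have hσt : σ = 9 * c * γ * t := by
      rw [htdef]; field_simp
    obtain ⟨M, hMdef⟩ : ∃ M : ℝ, M = max (Real.sqrt (9 * c * γ / σ)) 1 := ⟨_, rfl⟩
    have hM1 : (1:ℝ) ≤ M := hMdef ▸ le_max_right _ _
    have hK1 : 1 ≤ K0 := by
      rw [hK0]
      exact Nat.one_le_iff_ne_zero.mpr (Nat.ceil_pos.mpr (by positivity)).ne'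
    have hK1' : (1:ℝ) ≤ (K0:ℝ) := by exact_mod_cast hK1
    have hK0ge : Real.sqrt 2 * t ≤ (K0:ℝ) := by
      have h1 : σ / (9 * Lhat * m * γ) ≤ (K0:ℝ) := by
        rw [hK0]; exact Nat.le_ceil _
      have h2 : Real.sqrt 2 * t = σ / (9 * Lhat * m * γ) := by
        rw [htdef, hcdef]; field_simp
      linarith [h2 ▸ h1]
    have hconv : σ / ((3 * Real.sqrt 2 * Lhat * (m:ℝ)) ^ 2 * γ) = t / c := by
      rw [htdef, hcdef, div_div]
      congr 1
      ring
    have hconv2 : max (Real.sqrt ((9 : ℝ) * Real.sqrt 2 * Lhat * m * γ / σ)) 1 = M := by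
      rw [hMdef, hcdef]; ring_nf
    -- key claim
    have key : ∀ k : ℕ, K0 < k → t / c * ((k:ℝ) - K0 + M)^2 ≤ Aseq k := by
      intro k hk
      induction k, hk using Nat.le_induction with
      | base =>
        have hAK : (K0:ℝ)/c ≤ Aseq K0 := P1 K0 hK1
        have hAK0 : 0 ≤ Aseq K0 := le_trans (by positivity) hAK
        have hσA : 9 * t * (K0:ℝ) ≤ σ * Aseq K0 / γ := by
          have h2 : σ * ((K0:ℝ)/c) / γ = 9 * t * K0 := by
            rw [hσt]; field_simp
          rw [← h2]
          gcongr
        have hwle : Real.sqrt (1 + 9*t*K0) ≤ Real.sqrt (1 + σ * Aseq K0 / γ) :=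
          Real.sqrt_le_sqrt (by linarith)
        obtain ⟨w, hwdef⟩ : ∃ w : ℝ, w = Real.sqrt (1 + 9*t*(K0:ℝ)) := ⟨_, rfl⟩
        rw [← hwdef] at hwle
        have hw0 : 0 ≤ w := hwdef ▸ Real.sqrt_nonneg _
        have hwsq : w^2 = 1 + 9*t*(K0:ℝ) := by
          rw [hwdef]; exact Real.sq_sqrt (by positivity)
        have key2 : t * (1 + M)^2 ≤ (K0:ℝ) + w := by
          rcases le_total (Real.sqrt (9 * c * γ / σ)) 1 with h | h
          · -- M = 1; use K0 ≥ √2 t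
            have hMeq : M = 1 := by rw [hMdef]; exact max_eq_right h
            rw [hMeq]
            have hw4 : (4 - Real.sqrt 2) * t ≤ w := by
              have h9 : 9 * Real.sqrt 2 * t^2 ≤ 9 * t * (K0:ℝ) := by nlinarith
              calc (4 - Real.sqrt 2) * t
                  = Real.sqrt (((4 - Real.sqrt 2) * t)^2) :=
                    (Real.sqrt_sq (by nlinarith)).symm
                _ ≤ w := by rw [hwdef]; exact Real.sqrt_le_sqrt (by nlinarith)
            nlinarith
          · -- M = √(9cγ/σ) = 1/√t, and t ≤ 1
            obtain ⟨u, hudef⟩ : ∃ u : ℝ, u = Real.sqrt t := ⟨_, rfl⟩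
            have hu0 : 0 < u := hudef ▸ Real.sqrt_pos.mpr ht
            have hueq : t = u^2 := by rw [hudef]; exact (Real.sq_sqrt ht.le).symm
            have hMu : M = 1 / u := by
              rw [hMdef, max_eq_left h, show 9 * c * γ / σ = (1/u)^2 by
                rw [hσt, hueq]; field_simp]
              exact Real.sqrt_sq (by positivity)
            have harg1 : 9 * c * γ / σ = 1 / t := by
              rw [hσt]; field_simp
            have ht1 : t ≤ 1 := by
              have hsq : Real.sqrt (9*c*γ/σ) ^ 2 = 9*c*γ/σ :=
                Real.sq_sqrt (by positivity)
              have h2 : (1:ℝ) ≤ 1/t := by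
                rw [← harg1]; nlinarith [Real.sqrt_nonneg (9*c*γ/σ)]
              rw [le_div_iff₀ ht, one_mul] at h2; linarith
            have hu1 : u ≤ 1 := by nlinarith
            have hu4 : u^2 + 2*u ≤ w := by
              calc u^2 + 2*u = Real.sqrt ((u^2 + 2*u)^2) :=
                    (Real.sqrt_sq (by positivity)).symm
                _ ≤ w := by rw [hwdef]; exact Real.sqrt_le_sqrt (by nlinarith)
            have hform : t * (1 + M)^2 = (u + 1)^2 := by
              rw [hMu, hueq]; field_simp
            rw [hform]; nlinarith
        rw [hArec K0 hK1, harec K0 hK1]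
        have hcast : ((K0 + 1 : ℕ) : ℝ) - K0 + M = 1 + M := by push_cast; ring
        rw [hcast]
        calc t / c * (1 + M)^2 = (t * (1 + M)^2) / c := by ring
          _ ≤ ((K0:ℝ) + w) / c := by gcongr
          _ = (K0:ℝ)/c + w/c := by ring
          _ ≤ Aseq K0 + Real.sqrt (1 + σ * Aseq K0 / γ) / c := by gcongr
      | succ k hk ih =>
        have hk1 : 1 ≤ k := le_trans hK1 (Nat.le_of_succ_le hk)
        have hkK : (K0:ℝ) + 1 ≤ (k:ℝ) := by exact_mod_cast hk
        obtain ⟨s, hsdef⟩ : ∃ s : ℝ, s = (k:ℝ) - K0 + M := ⟨_, rfl⟩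
        rw [← hsdef] at ih
        have hs1 : 1 ≤ s := by rw [hsdef]; linarith
        have hAk0 : 0 ≤ Aseq k := le_trans (by positivity) ih
        have hσA : 9 * t^2 * s^2 ≤ σ * Aseq k / γ := by
          have h2 : σ * (t / c * s^2) / γ = 9 * t^2 * s^2 := by
            rw [hσt]; field_simp
          rw [← h2]
          gcongr
        have ha3 : 3*t*s/c ≤ a (k+1) := by
          rw [harec k hk1]
          gcongr
          calc 3*t*s = Real.sqrt ((3*t*s)^2) := (Real.sqrt_sq (by positivity)).symm
            _ ≤ Real.sqrt (1 + σ * Aseq k / γ) := Real.sqrt_le_sqrt (by nlinarith)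
        rw [hArec k hk1]
        have hcast : ((k + 1 : ℕ) : ℝ) - K0 + M = s + 1 := by rw [hsdef]; push_cast; ring
        rw [hcast]
        have hstep : t / c * (s + 1)^2 ≤ t / c * s^2 + 3*t*s/c := by
          have h1 : (s+1)^2 ≤ s^2 + 3*s := by nlinarith
          have h2 := mul_le_mul_of_nonneg_left h1 (le_of_lt (div_pos ht hc))
          calc t / c * (s + 1)^2 ≤ t / c * (s^2 + 3*s) := h2
            _ = t / c * s^2 + 3*t*s/c := by ring
        linarith
    intro k hk
    have hkey := key k hk
    rw [hconv, hconv2]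
    exact hkey
  intro k hk
  refine ⟨?_, fun hσp h => P2 hσp k h⟩
  rw [← hcdef]
  exact P1 k hk
end

section
/- Consider the CLVR iterates and suppose A E[x̃_k] ≠ b. Let u = x* and let v ∈ ℝⁿ be determined by ‖A E[x̃_k] − b‖ · v = ‖y*‖ (A E[x̃_k] − b). Then for all k ≥ 1: (i) ‖A E[x̃_k] − b‖ · ‖y*‖ ≤ (γ‖u − x₀‖² + 4‖v − y₀‖²/γ)/(2 A_k); (ii) (cᵀE[x̃_k] + r(E[x̃_k])) − (cᵀx* + r(x*)) ≥ −(γ‖u − x₀‖² + 4‖v − y₀‖²/γ)/(2 A_k); and (iii) (cᵀE[x̃_k] + r(E[x̃_k])) − (cᵀx* + r(x*)) ≤ (γ‖u − x₀‖² + 4‖v − y₀‖²/γ)/A_k, where y₀ = 0 and expectations are over the i.i.d. uniform random block indices. -/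
open scoped RealInnerProductSpace BigOperators

/-- Matrix–vector product into Euclidean space. -/
noncomputable def mv {n d : ℕ} (A : Matrix (Fin n) (Fin d) ℝ)
    (x : EuclideanSpace ℝ (Fin d)) : EuclideanSpace ℝ (Fin n) :=
  WithLp.toLp 2 (fun i => ∑ j, A i j * x j)

/-- Transposed matrix–vector product. -/
noncomputable def mvT {n d : ℕ} (A : Matrix (Fin n) (Fin d) ℝ)
    (y : EuclideanSpace ℝ (Fin n)) : EuclideanSpace ℝ (Fin d) :=
  WithLp.toLp 2 (fun j => ∑ i, A i j * y i)

/-- Extension of a finite index tuple `js : Fin k → Fin m` (the realized random blocks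
`j₁, …, j_k`) to an infinite index sequence. -/
def pad {m : ℕ} (hm : 0 < m) (k : ℕ) (js : Fin k → Fin m) : ℕ → Fin m :=
  fun t => if h : t < k then js ⟨t, h⟩ else ⟨0, hm⟩

/-- Expectation of a real-valued quantity over the i.i.d. uniform block indices
`j₁, …, j_k`. -/
noncomputable def expE {m : ℕ} (hm : 0 < m) (k : ℕ) (f : (ℕ → Fin m) → ℝ) : ℝ :=
  ((m : ℝ) ^ k)⁻¹ * ∑ js : Fin k → Fin m, f (pad hm k js)

/-- Expectation of a vector-valued quantity over the i.i.d. uniform block indices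
`j₁, …, j_k`. -/
noncomputable def expVec {m : ℕ} (hm : 0 < m) (k : ℕ) {E : Type*}
    [AddCommMonoid E] [Module ℝ E] (f : (ℕ → Fin m) → E) : E :=
  ((m : ℝ) ^ k)⁻¹ • ∑ js : Fin k → Fin m, f (pad hm k js)

/-!
For every dual point `w` the averaged iterate satisfies the master inequality
`A_k (f(E x̃_k) - f(x*) + ⟪w, A E x̃_k - b⟫) ≤ γ/2 ‖x* - x₀‖² + ‖w - y₀‖²/(2γ)`,
where `f = ⟪c, ·⟫ + r`. Pathwise, the primal step is dual averaging: the three-point property of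
its `(γ + σ A_k)`-strongly convex objective telescopes into a bound on the Lagrangian gaps
against `ȳ_{i-1}`. In expectation, averaging over the fresh block index `j_i` turns the
randomized dual step into an exact expansion of `E ‖w - y_i‖²`, which telescopes; the
extrapolation error is absorbed by the primal distance terms through Young's inequality and the
step-size rule `2 γ L̂² m² a_{k+1}² = γ + σ A_k`. Jensen's inequality moves the bound to
`E x̃_k`. Finally `w = 2v`, together with the saddle-point inequality
`f(z) - f(x*) ≥ -⟪y*, A z - b⟫`, separates the constraint violation from the objective gap.
-/

lemma sum_Icc_sub_pred {M : Type*} [AddCommGroup M] (f : ℕ → M) (k : ℕ) :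
    ∑ i ∈ Finset.Icc 1 k, (f i - f (i - 1)) = f k - f 0 := by
  induction k with
  | zero => simp
  | succ k ih =>
    rw [Finset.sum_Icc_succ_top (by omega), ih, Nat.add_sub_cancel]
    abel

lemma Fintype.sum_sum_update {ι α M : Type*} [Fintype ι] [DecidableEq ι] [Fintype α]
    [AddCommMonoid M] (i : ι) (f : (ι → α) → M) :
    ∑ g : ι → α, ∑ a : α, f (Function.update g i a) = Fintype.card α • ∑ g, f g := by
  let e := (Equiv.piSplitAt i fun _ => α).symm
  have hupd : ∀ (v a : α) (rest : {j // j ≠ i} → α),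
      Function.update (e (v, rest)) i a = e (a, rest) := by
    intro v a rest
    funext t
    by_cases h : t = i
    · subst h; simp [e, Equiv.piSplitAt]
    · simp [e, Function.update, h, Equiv.piSplitAt]
  rw [← e.sum_comp, ← e.sum_comp, Fintype.sum_prod_type, Fintype.sum_prod_type]
  simp only [hupd, Finset.sum_const, Finset.card_univ]
  rw [Finset.sum_comm]

section StrongConvexity

variable {E : Type*} [NormedAddCommGroup E] [InnerProductSpace ℝ E] {s : Set E}

lemma convexOn_inner_add_const (hs : Convex ℝ s) (v : E) (c : ℝ) :
    ConvexOn ℝ s fun z => ⟪v, z⟫ + c :=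
  ⟨hs, fun x _ y _ a b _ _ hab => le_of_eq <| by
    simp only [inner_add_right, real_inner_smul_right, smul_eq_mul]
    linear_combination (-c) * hab⟩

lemma StrongConvexOn.add {m m' : ℝ} {f g : E → ℝ} (hf : StrongConvexOn s m f)
    (hg : StrongConvexOn s m' g) : StrongConvexOn s (m + m') fun z => f z + g z := by
  refine (UniformConvexOn.add hf hg).mono fun t => le_of_eq ?_
  simp only [Pi.add_apply]
  ring

lemma StrongConvexOn.const_mul {m c : ℝ} {f : E → ℝ} (hf : StrongConvexOn s m f) (hc : 0 ≤ c) :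
    StrongConvexOn s (c * m) fun z => c * f z := by
  refine ⟨hf.1, fun x hx y hy t u ht hu htu => ?_⟩
  have h := mul_le_mul_of_nonneg_left (hf.2 hx hy ht hu htu) hc
  simp only [smul_eq_mul] at h ⊢
  linarith

lemma StrongConvexOn.sum {ι : Type*} {t : Finset ι} {m : ι → ℝ} {f : ι → E → ℝ}
    (hs : Convex ℝ s) (hf : ∀ i ∈ t, StrongConvexOn s (m i) (f i)) :
    StrongConvexOn s (∑ i ∈ t, m i) fun z => ∑ i ∈ t, f i z := by
  classical
  induction t using Finset.induction_on with
  | empty => simpa using convexOn_const (0 : ℝ) hs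
  | insert i t hi ih =>
    simp only [Finset.sum_insert hi]
    exact (hf i (Finset.mem_insert_self i t)).add
      (ih fun j hj => hf j (Finset.mem_insert_of_mem hj))

lemma StrongConvexOn.inner_add {m : ℝ} {r : E → ℝ} (hr : StrongConvexOn s m r) (v : E) :
    StrongConvexOn s m fun z => ⟪z, v⟫ + r z := by
  have hlin : StrongConvexOn s 0 fun z => ⟪z, v⟫ := by
    rw [strongConvexOn_zero]
    simpa only [real_inner_comm v, add_zero] using convexOn_inner_add_const hr.1 v 0
  simpa only [zero_add] using hlin.add hr

lemma strongConvexOn_norm_sub_sq (hs : Convex ℝ s) (x₀ : E) :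
    StrongConvexOn s 2 fun z => ‖z - x₀‖ ^ 2 := by
  rw [strongConvexOn_iff_convex]
  convert convexOn_inner_add_const hs ((-2 : ℝ) • x₀) (‖x₀‖ ^ 2) using 2 with z
  rw [norm_sub_sq_real, real_inner_smul_left, real_inner_comm]
  ring

lemma StrongConvexOn.add_sq_norm_sub_le_of_isMinOn {μ : ℝ} {φ : E → ℝ}
    (hφ : StrongConvexOn s μ φ) (hμ : 0 ≤ μ) {x₁ z : E} (hx₁ : x₁ ∈ s)
    (hmin : IsMinOn φ s x₁) (hz : z ∈ s) : φ x₁ + μ / 2 * ‖z - x₁‖ ^ 2 ≤ φ z := by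
  have hC : 0 ≤ μ / 2 * ‖z - x₁‖ ^ 2 := by positivity
  have key : ∀ t : ℝ, 0 < t → t ≤ 1 → (1 - t) * (μ / 2 * ‖z - x₁‖ ^ 2) ≤ φ z - φ x₁ := by
    intro t ht0 ht1
    have hmem : t • z + (1 - t) • x₁ ∈ s := hφ.1 hz hx₁ ht0.le (by linarith) (by ring)
    have h1 := hφ.2 hz hx₁ ht0.le (by linarith) (by ring : t + (1 - t) = 1)
    have h2 := isMinOn_iff.1 hmin _ hmem
    simp only [smul_eq_mul] at h1
    refine le_of_mul_le_mul_left ?_ ht0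
    linarith
  -- let `t → 0` in `key`
  refine le_of_forall_pos_le_add fun ε hε => ?_
  rcases le_or_gt (μ / 2 * ‖z - x₁‖ ^ 2) ε with h | h
  · linarith [key 1 one_pos le_rfl]
  · have hCpos := hε.trans h
    have hk := key (ε / (μ / 2 * ‖z - x₁‖ ^ 2)) (by positivity) ((div_le_one hCpos).2 h.le)
    rw [sub_mul, div_mul_cancel₀ _ hCpos.ne', one_mul] at hk
    linarith

end StrongConvexity

section DualAveraging

variable {E : Type*} [NormedAddCommGroup E] [InnerProductSpace ℝ E]

noncomputable def dualAvg (a : ℕ → ℝ) (g : ℕ → E) (r : E → ℝ) (γ : ℝ) (x₀ : E) (k : ℕ)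
    (z : E) : ℝ :=
  ∑ i ∈ Finset.Icc 1 k, a i * (⟪z, g i⟫ + r z) + γ / 2 * ‖z - x₀‖ ^ 2

variable {a : ℕ → ℝ} {g : ℕ → E} {r : E → ℝ} {γ : ℝ} {x₀ : E} {s : Set E}

lemma dualAvg_succ (k : ℕ) (z : E) :
    dualAvg a g r γ x₀ (k + 1) z
      = dualAvg a g r γ x₀ k z + a (k + 1) * (⟪z, g (k + 1)⟫ + r z) := by
  simp only [dualAvg, Finset.sum_Icc_succ_top (by omega : 1 ≤ k + 1)]
  ring

lemma dualAvg_congr {g' : ℕ → E} {k : ℕ} (h : ∀ i ∈ Finset.Icc 1 k, g i = g' i) :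
    dualAvg a g r γ x₀ k = dualAvg a g' r γ x₀ k := by
  funext z
  simp only [dualAvg]
  rw [Finset.sum_congr rfl fun i hi => by rw [h i hi]]

lemma strongConvexOn_dualAvg {σ : ℝ} (hr : StrongConvexOn s σ r) (ha : ∀ i, 0 ≤ a i)
    (hγ : 0 ≤ γ) (k : ℕ) :
    StrongConvexOn s (γ + σ * ∑ i ∈ Finset.Icc 1 k, a i) (dualAvg a g r γ x₀ k) := by
  have hsum := StrongConvexOn.sum (t := Finset.Icc 1 k) hr.1 fun i _ =>
    (hr.inner_add (g i)).const_mul (ha i)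
  have hquad := (strongConvexOn_norm_sub_sq hr.1 x₀).const_mul (c := γ / 2) (by positivity)
  exact (hsum.add hquad).mono (le_of_eq (by rw [Finset.mul_sum]; ring_nf))

/-- Telescoping the three-point property along the iterates of dual averaging. -/
lemma sum_add_sq_norm_sub_le_dualAvg {μ : ℕ → ℝ} {x : ℕ → E} (hμ : ∀ i, 0 ≤ μ i)
    (hμ0 : μ 0 = γ) (hx0 : x 0 = x₀)
    (hsc : ∀ i, 1 ≤ i → StrongConvexOn s (μ i) (dualAvg a g r γ x₀ i))
    (hmin : ∀ i, 1 ≤ i → x i ∈ s ∧ IsMinOn (dualAvg a g r γ x₀ i) s (x i)) (k : ℕ) {z : E}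
    (hz : z ∈ s) :
    ∑ i ∈ Finset.Icc 1 k,
        (a i * (⟪x i, g i⟫ + r (x i)) + μ (i - 1) / 2 * ‖x i - x (i - 1)‖ ^ 2)
      + μ k / 2 * ‖z - x k‖ ^ 2 ≤ dualAvg a g r γ x₀ k z := by
  induction k generalizing z with
  | zero => simp [dualAvg, hμ0, hx0]
  | succ k ih =>
    obtain ⟨hxs, hxmin⟩ := hmin (k + 1) (by omega)
    have h3 := (hsc (k + 1) (by omega)).add_sq_norm_sub_le_of_isMinOn (hμ _) hxs hxmin hz
    have hk := ih hxs
    rw [dualAvg_succ] at h3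
    rw [Finset.sum_Icc_succ_top (by omega : 1 ≤ k + 1), Nat.add_sub_cancel]
    linarith

end DualAveraging

namespace CLVR

open Finset

section Blocks

variable {n d m : ℕ}

lemma mv_sub (A : Matrix (Fin n) (Fin d) ℝ) (x x' : EuclideanSpace ℝ (Fin d)) :
    mv A (x - x') = mv A x - mv A x' := by
  ext i
  simp [mv, mul_sub, sum_sub_distrib]

lemma inner_mvT (A : Matrix (Fin n) (Fin d) ℝ) (y : EuclideanSpace ℝ (Fin n))
    (x : EuclideanSpace ℝ (Fin d)) : ⟪x, mvT A y⟫ = ⟪y, mv A x⟫ := by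
  simp only [mv, mvT, PiLp.inner_apply, RCLike.inner_apply, conj_trivial, sum_mul]
  rw [sum_comm]
  exact sum_congr rfl fun i _ => sum_congr rfl fun j _ => by ring

variable (S : Fin n → Fin m)

noncomputable def blockProj (j : Fin m) (w : EuclideanSpace ℝ (Fin n)) :
    EuclideanSpace ℝ (Fin n) :=
  WithLp.toLp 2 fun i => if S i = j then w i else 0

lemma norm_blockProj (j : Fin m) (w : EuclideanSpace ℝ (Fin n)) :
    ‖blockProj S j w‖ = Real.sqrt (∑ i ∈ univ.filter (fun i => S i = j), w i ^ 2) := by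
  rw [EuclideanSpace.norm_eq, sum_filter]
  congr 1
  refine sum_congr rfl fun i _ => ?_
  by_cases h : S i = j <;> simp [blockProj, h]

lemma sum_blockProj (w : EuclideanSpace ℝ (Fin n)) : ∑ j, blockProj S j w = w := by
  ext i
  simp [blockProj]

lemma sum_norm_blockProj_sq (w : EuclideanSpace ℝ (Fin n)) :
    ∑ j, ‖blockProj S j w‖ ^ 2 = ‖w‖ ^ 2 := by
  simp only [EuclideanSpace.norm_sq_eq]
  rw [sum_comm]
  refine sum_congr rfl fun i _ => ?_
  simp [blockProj, apply_ite]

lemma inner_blockProj_left (j : Fin m) (q v : EuclideanSpace ℝ (Fin n)) :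
    ⟪blockProj S j q, v⟫ = ⟪blockProj S j q, blockProj S j v⟫ := by
  simp only [PiLp.inner_apply]
  refine sum_congr rfl fun i _ => ?_
  by_cases h : S i = j <;> simp [blockProj, h]

lemma inner_blockProj_self (j : Fin m) (q : EuclideanSpace ℝ (Fin n)) :
    ⟪blockProj S j q, q⟫ = ‖blockProj S j q‖ ^ 2 := by
  rw [inner_blockProj_left, real_inner_self_eq_norm_sq]

lemma sum_norm_sub_smul_blockProj_sq (u q : EuclideanSpace ℝ (Fin n)) (s : ℝ) :
    ∑ j, ‖u - s • blockProj S j q‖ ^ 2 = m * ‖u‖ ^ 2 - 2 * s * ⟪u, q⟫ + s ^ 2 * ‖q‖ ^ 2 := by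
  simp only [norm_sub_sq_real, norm_smul, real_inner_smul_right, mul_pow, Real.norm_eq_abs,
    sq_abs, sum_add_distrib, sum_sub_distrib, ← mul_sum, ← inner_sum, sum_blockProj,
    sum_norm_blockProj_sq, sum_const, card_univ, Fintype.card_fin, nsmul_eq_mul]
  ring

variable {S} {A : Matrix (Fin n) (Fin d) ℝ} {L : ℝ}

lemma norm_mv_sq_le (hL : ∀ j z, ‖blockProj S j (mv A z)‖ ≤ L * ‖z‖)
    (z : EuclideanSpace ℝ (Fin d)) : ‖mv A z‖ ^ 2 ≤ m * (L * ‖z‖) ^ 2 := by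
  rw [← sum_norm_blockProj_sq S]
  calc ∑ j, ‖blockProj S j (mv A z)‖ ^ 2 ≤ ∑ _j : Fin m, (L * ‖z‖) ^ 2 :=
        sum_le_sum fun j _ => pow_le_pow_left₀ (norm_nonneg _) (hL j z) 2
    _ = m * (L * ‖z‖) ^ 2 := by simp

/-- Young's inequality on the cross term of the extrapolated dual step. -/
lemma neg_mul_inner_blockProj_le (hL : ∀ j z, ‖blockProj S j (mv A z)‖ ≤ L * ‖z‖) (j : Fin m)
    (q : EuclideanSpace ℝ (Fin n)) (δ : EuclideanSpace ℝ (Fin d)) {B μ : ℝ} (hB : 0 ≤ B)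
    (hμ : 2 * B * L ^ 2 ≤ μ) :
    -(B * ⟪blockProj S j q, q + mv A δ⟫)
      ≤ μ / 2 * ‖δ‖ ^ 2 - 3 / 4 * B * ‖blockProj S j q‖ ^ 2 := by
  have hcs : -(‖blockProj S j q‖ * (L * ‖δ‖)) ≤ ⟪blockProj S j q, mv A δ⟫ := by
    rw [inner_blockProj_left]
    have h1 := abs_real_inner_le_norm (blockProj S j q) (blockProj S j (mv A δ))
    have h2 := mul_le_mul_of_nonneg_left (hL j δ) (norm_nonneg (blockProj S j q))
    linarith [neg_abs_le ⟪blockProj S j q, blockProj S j (mv A δ)⟫]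
  rw [inner_add_right, inner_blockProj_self]
  nlinarith [mul_nonneg hB (sq_nonneg (L * ‖δ‖ - ‖blockProj S j q‖ / 2)),
    mul_le_mul_of_nonneg_right hμ (sq_nonneg ‖δ‖), mul_le_mul_of_nonneg_left hcs hB]

end Blocks

section Resampling

variable {m k : ℕ}

def DependsOnFirst {α : Type*} (t : ℕ) (F : (ℕ → Fin m) → α) : Prop :=
  ∀ ω ω' : ℕ → Fin m, (∀ s < t, ω s = ω' s) → F ω = F ω'

lemma sum_inv_pow_card (hm : 0 < m) :
    ∑ _js : Fin k → Fin m, ((m : ℝ) ^ k)⁻¹ = 1 := by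
  have : (m : ℝ) ^ k ≠ 0 := by positivity
  simp [this]

variable (hm : 0 < m)

variable {α β δ : Type*} {t : ℕ} {F : (ℕ → Fin m) → α}

lemma DependsOnFirst.comp (hF : DependsOnFirst t F) (f : α → β) :
    DependsOnFirst t fun ω => f (F ω) :=
  fun ω ω' hω => congrArg f (hF ω ω' hω)

lemma DependsOnFirst.comp₂ {G : (ℕ → Fin m) → β} (hF : DependsOnFirst t F)
    (hG : DependsOnFirst t G) (f : α → β → δ) : DependsOnFirst t fun ω => f (F ω) (G ω) :=
  fun ω ω' hω => congrArg₂ f (hF ω ω' hω) (hG ω ω' hω)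

lemma pad_update_of_ne (js : Fin k → Fin m) (i : Fin k) (j : Fin m) {s : ℕ}
    (hs : s ≠ i) : pad hm k (Function.update js i j) s = pad hm k js s := by
  unfold pad
  split_ifs with h
  · exact Function.update_of_ne (fun hc => hs (by rw [← hc])) _ _
  · rfl

lemma DependsOnFirst.pad_update (hF : DependsOnFirst t F) (js : Fin k → Fin m)
    (i : Fin k) (hi : t ≤ i) (j : Fin m) :
    F (pad hm k (Function.update js i j)) = F (pad hm k js) :=
  hF _ _ fun s hs => pad_update_of_ne hm js i j (by omega)

lemma expE_const (c : ℝ) : expE hm k (fun _ => c) = c := by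
  rw [expE, mul_sum, ← sum_mul, sum_inv_pow_card hm, one_mul]

variable {F G : (ℕ → Fin m) → ℝ}

lemma expE_add : expE hm k (fun ω => F ω + G ω) = expE hm k F + expE hm k G := by
  simp only [expE, sum_add_distrib, mul_add]

lemma expE_sub : expE hm k (fun ω => F ω - G ω) = expE hm k F - expE hm k G := by
  simp only [expE, sum_sub_distrib, mul_sub]

lemma expE_neg : expE hm k (fun ω => -F ω) = -expE hm k F := by
  simp only [expE, sum_neg_distrib, mul_neg]

lemma expE_const_mul (c : ℝ) : expE hm k (fun ω => c * F ω) = c * expE hm k F := by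
  simp only [expE, ← mul_sum]
  ring

lemma expE_sum {ι : Type*} (s : Finset ι) (H : ι → (ℕ → Fin m) → ℝ) :
    expE hm k (fun ω => ∑ i ∈ s, H i ω) = ∑ i ∈ s, expE hm k (H i) := by
  simp only [expE, mul_sum]
  rw [sum_comm]

lemma expE_mono (h : ∀ ω, F ω ≤ G ω) : expE hm k F ≤ expE hm k G :=
  mul_le_mul_of_nonneg_left (sum_le_sum fun _ _ => h _) (by positivity)

lemma expE_nonneg (h : ∀ ω, 0 ≤ F ω) : 0 ≤ expE hm k F :=
  expE_const hm (k := k) 0 ▸ expE_mono hm h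

/-- The index `ω t = j_{t+1}` is uniform and independent of `ω 0, …, ω (t - 1)`. -/
lemma expE_resample {t : ℕ} (ht : t < k) {H : (ℕ → Fin m) → Fin m → ℝ}
    (hH : ∀ j, DependsOnFirst t fun ω => H ω j) :
    expE hm k (fun ω => H ω (ω t)) = expE hm k fun ω => (m : ℝ)⁻¹ * ∑ j, H ω j := by
  let i : Fin k := ⟨t, ht⟩
  have h := Fintype.sum_sum_update i fun js => H (pad hm k js) (js i)
  simp only [Function.update_self, Fintype.card_fin, nsmul_eq_mul] at h
  simp only [fun js j => (hH j).pad_update hm js i le_rfl j] at h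
  have hpad : ∀ js : Fin k → Fin m, pad hm k js t = js i := fun js => dif_pos ht
  have hm' : (m : ℝ) ≠ 0 := by positivity
  simp only [expE, hpad, ← mul_sum, h]
  field_simp

end Resampling

section BlockAveraging

variable {n m k : ℕ} (hm : 0 < m) (S : Fin n → Fin m)

lemma expE_norm_sub_smul_blockProj_sq {t : ℕ} (ht : t < k)
    {u q : (ℕ → Fin m) → EuclideanSpace ℝ (Fin n)} (hu : DependsOnFirst t u)
    (hq : DependsOnFirst t q) (s : ℝ) :
    expE hm k (fun ω => ‖u ω - s • blockProj S (ω t) (q ω)‖ ^ 2)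
      = expE hm k (fun ω => ‖u ω‖ ^ 2) - 2 * (s / m) * expE hm k (fun ω => ⟪u ω, q ω⟫)
        + s ^ 2 / m * expE hm k (fun ω => ‖q ω‖ ^ 2) := by
  rw [expE_resample hm ht fun j => hu.comp₂ hq fun u q => ‖u - s • blockProj S j q‖ ^ 2]
  have hm' : (m : ℝ) ≠ 0 := by positivity
  have h : ∀ ω, (m : ℝ)⁻¹ * ∑ j, ‖u ω - s • blockProj S j (q ω)‖ ^ 2
      = ‖u ω‖ ^ 2 - 2 * (s / m) * ⟪u ω, q ω⟫ + s ^ 2 / m * ‖q ω‖ ^ 2 := by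
    intro ω
    rw [sum_norm_sub_smul_blockProj_sq]
    field_simp
  simp only [h, expE_add, expE_sub, expE_const_mul]

lemma expE_norm_blockProj_sq {t : ℕ} (ht : t < k) {q : (ℕ → Fin m) → EuclideanSpace ℝ (Fin n)}
    (hq : DependsOnFirst t q) :
    expE hm k (fun ω => ‖blockProj S (ω t) (q ω)‖ ^ 2)
      = (m : ℝ)⁻¹ * expE hm k (fun ω => ‖q ω‖ ^ 2) := by
  rw [expE_resample hm ht fun j => hq.comp₂ hq fun q _ => ‖blockProj S j q‖ ^ 2]
  simp only [sum_norm_blockProj_sq, expE_const_mul]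

end BlockAveraging

section Jensen

variable {m k : ℕ} (hm : 0 < m)
variable {E : Type*} [NormedAddCommGroup E] [InnerProductSpace ℝ E] {s : Set E}
  {F : (ℕ → Fin m) → E}

lemma expVec_mem (hs : Convex ℝ s) (hF : ∀ ω, F ω ∈ s) : expVec hm k F ∈ s := by
  rw [expVec, smul_sum]
  exact hs.sum_mem (fun _ _ => by positivity) (sum_inv_pow_card hm) fun _ _ => hF _

lemma _root_.ConvexOn.map_expVec_le {f : E → ℝ} (hf : ConvexOn ℝ s f) (hF : ∀ ω, F ω ∈ s) :
    f (expVec hm k F) ≤ expE hm k fun ω => f (F ω) := by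
  rw [expVec, expE, smul_sum, mul_sum]
  exact hf.map_sum_le (fun _ _ => by positivity) (sum_inv_pow_card hm) fun _ _ => hF _

end Jensen

section StepSizes

structure IsStepSchedule (σ γ L : ℝ) (m : ℕ) (a Aseq : ℕ → ℝ) : Prop where
  a_zero : a 0 = 0
  A_zero : Aseq 0 = 0
  a_one : a 1 = 1 / (Real.sqrt 2 * L * m)
  a_succ : ∀ k, 1 ≤ k → a (k + 1) = Real.sqrt (1 + σ * Aseq k / γ) / (Real.sqrt 2 * L * m)
  A_succ : ∀ k, Aseq (k + 1) = Aseq k + a (k + 1)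

namespace IsStepSchedule

variable {σ γ L : ℝ} {m : ℕ} {a Aseq : ℕ → ℝ} (h : IsStepSchedule σ γ L m a Aseq)
include h

lemma a_succ_eq (k : ℕ) :
    a (k + 1) = Real.sqrt (1 + σ * Aseq k / γ) / (Real.sqrt 2 * L * m) := by
  rcases Nat.eq_zero_or_pos k with rfl | hk
  · simp [h.a_one, h.A_zero]
  · exact h.a_succ k hk

lemma A_eq_sum (k : ℕ) : Aseq k = ∑ i ∈ Icc 1 k, a i := by
  induction k with
  | zero => simp [h.A_zero]
  | succ k ih => rw [h.A_succ, ih, sum_Icc_succ_top (by omega)]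

lemma inv_smul_sum_eq_centerMass {E : Type*} [AddCommGroup E] [Module ℝ E] (k : ℕ)
    (p : ℕ → E) : (Aseq k)⁻¹ • ∑ i ∈ Icc 1 k, a i • p i = (Icc 1 k).centerMass a p := by
  rw [centerMass, ← h.A_eq_sum]

lemma a_nonneg (hL : 0 ≤ L) (i : ℕ) : 0 ≤ a i := by
  rcases i with _ | k
  · exact h.a_zero.ge
  · rw [h.a_succ_eq]
    positivity

lemma A_mono (hL : 0 ≤ L) : Monotone Aseq :=
  monotone_nat_of_le_succ fun k => by linarith [h.A_succ k, h.a_nonneg hL (k + 1)]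

lemma A_nonneg (hL : 0 ≤ L) (k : ℕ) : 0 ≤ Aseq k :=
  h.A_zero ▸ h.A_mono hL (Nat.zero_le k)

lemma a_mono (hσ : 0 ≤ σ) (hγ : 0 ≤ γ) (hL : 0 ≤ L) : Monotone a := by
  refine monotone_nat_of_le_succ fun k => ?_
  rcases k with _ | k
  · exact h.a_zero ▸ h.a_nonneg hL 1
  · rw [h.a_succ_eq, h.a_succ_eq]
    have := h.A_mono hL (Nat.le_succ k)
    gcongr

lemma a_succ_pos (hσ : 0 ≤ σ) (hγ : 0 ≤ γ) (hL : 0 < L) (hm : 0 < m) (k : ℕ) :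
    0 < a (k + 1) := by
  have := h.A_nonneg hL.le k
  rw [h.a_succ_eq]
  positivity

lemma A_pos (hσ : 0 ≤ σ) (hγ : 0 ≤ γ) (hL : 0 < L) (hm : 0 < m) {k : ℕ} (hk : 1 ≤ k) :
    0 < Aseq k := by
  obtain ⟨k, rfl⟩ := Nat.exists_eq_add_of_le' hk
  rw [h.A_succ]
  linarith [h.A_nonneg hL.le k, h.a_succ_pos hσ hγ hL hm k]

lemma sq_a_succ (hσ : 0 ≤ σ) (hγ : 0 < γ) (hL : 0 < L) (hm : 0 < m) (k : ℕ) :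
    2 * γ * L ^ 2 * m ^ 2 * a (k + 1) ^ 2 = γ + σ * Aseq k := by
  have := h.A_nonneg hL.le k
  rw [h.a_succ_eq, div_pow, Real.sq_sqrt (by positivity), mul_pow, mul_pow,
    Real.sq_sqrt zero_le_two]
  field_simp

end IsStepSchedule

variable {n d m : ℕ} {A : Matrix (Fin n) (Fin d) ℝ} {S : Fin n → Fin m} {σ γ L : ℝ}
  {a Aseq : ℕ → ℝ}

lemma IsStepSchedule.mul_norm_mv_sq_le (hs : IsStepSchedule σ γ L m a Aseq) (hσ : 0 ≤ σ)
    (hγ : 0 < γ) (hL : 0 < L) (hm : 0 < m)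
    (hLb : ∀ j z, ‖blockProj S j (mv A z)‖ ≤ L * ‖z‖) (k : ℕ) (z : EuclideanSpace ℝ (Fin d)) :
    γ * m * a k ^ 2 / 2 * ‖mv A z‖ ^ 2 ≤ (γ + σ * Aseq k) / 2 * ‖z‖ ^ 2 := by
  have hA := norm_mv_sq_le hLb z
  have ha : a k ^ 2 ≤ a (k + 1) ^ 2 :=
    pow_le_pow_left₀ (hs.a_nonneg hL.le k) (hs.a_mono hσ hγ.le hL.le (Nat.le_succ k)) 2
  rw [← hs.sq_a_succ hσ hγ hL hm]
  have h1 : γ * m * a k ^ 2 / 2 * ‖mv A z‖ ^ 2 ≤ γ * m * a k ^ 2 / 2 * (m * (L * ‖z‖) ^ 2) :=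
    mul_le_mul_of_nonneg_left hA (by positivity)
  have h2 : 0 ≤ γ * m ^ 2 * L ^ 2 * ‖z‖ ^ 2 := by positivity
  nlinarith [mul_le_mul_of_nonneg_left ha h2]

end StepSizes

section Lagrangian

variable {n d : ℕ} {A : Matrix (Fin n) (Fin d) ℝ} {b : EuclideanSpace ℝ (Fin n)}
  {c : EuclideanSpace ℝ (Fin d)} {r : EuclideanSpace ℝ (Fin d) → ℝ}
  {Lag : EuclideanSpace ℝ (Fin d) → EuclideanSpace ℝ (Fin n) → ℝ}
  {xstar : EuclideanSpace ℝ (Fin d)} {ystar : EuclideanSpace ℝ (Fin n)}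

lemma mv_eq_of_le_lagrangian (hLag : ∀ x y, Lag x y = ⟪c, x⟫ + r x + ⟪y, mv A x⟫ - ⟪y, b⟫)
    (hmax : ∀ y, Lag xstar y ≤ Lag xstar ystar) : mv A xstar = b := by
  have h := hmax (ystar + (mv A xstar - b))
  rw [hLag, hLag, inner_add_left, inner_add_left] at h
  have h0 : ‖mv A xstar - b‖ ^ 2 ≤ 0 := by
    rw [← real_inner_self_eq_norm_sq, inner_sub_right]
    linarith
  exact sub_eq_zero.1 (norm_eq_zero.1 (pow_eq_zero_iff two_ne_zero |>.1
    (le_antisymm h0 (sq_nonneg _))))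

lemma neg_inner_le_of_lagrangian_le
    (hLag : ∀ x y, Lag x y = ⟪c, x⟫ + r x + ⟪y, mv A x⟫ - ⟪y, b⟫) (hfeas : mv A xstar = b)
    {z : EuclideanSpace ℝ (Fin d)} (hz : Lag xstar ystar ≤ Lag z ystar) :
    -⟪ystar, mv A z - b⟫ ≤ ⟪c, z⟫ + r z - (⟪c, xstar⟫ + r xstar) := by
  rw [hLag, hLag, hfeas] at hz
  rw [inner_sub_right]
  linarith

lemma bounds_of_gap_le {F : Type*} [NormedAddCommGroup F] [InnerProductSpace ℝ F]
    {res ystar v y₀ : F} {G Ak γ D : ℝ} (hAk : 0 < Ak) (hγ : 0 < γ) (hy₀ : y₀ = 0)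
    (hv : ‖res‖ • v = ‖ystar‖ • res) (hsad : -⟪ystar, res⟫ ≤ G)
    (hgap : Ak * (G + ⟪(2 : ℝ) • v, res⟫) ≤ γ / 2 * D + ‖(2 : ℝ) • v - y₀‖ ^ 2 / (2 * γ)) :
    ‖res‖ * ‖ystar‖ ≤ (γ * D + 4 * ‖v - y₀‖ ^ 2 / γ) / (2 * Ak) ∧
      -((γ * D + 4 * ‖v - y₀‖ ^ 2 / γ) / (2 * Ak)) ≤ G ∧
      G ≤ (γ * D + 4 * ‖v - y₀‖ ^ 2 / γ) / Ak := by
  subst hy₀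
  have hvres : ⟪v, res⟫ = ‖ystar‖ * ‖res‖ := by
    have h1 := congrArg (fun z => ⟪z, res⟫) hv
    simp only [real_inner_smul_left, real_inner_self_eq_norm_sq] at h1
    rcases eq_or_ne ‖res‖ 0 with h0 | h0
    · simp [norm_eq_zero.1 h0]
    · exact mul_left_cancel₀ h0 (by linear_combination h1)
  have hcs : ⟪ystar, res⟫ ≤ ‖ystar‖ * ‖res‖ := real_inner_le_norm _ _
  have h2v : ‖(2 : ℝ) • v‖ ^ 2 = 4 * ‖v‖ ^ 2 := by
    rw [norm_smul, Real.norm_two]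
    ring
  rw [real_inner_smul_left, hvres, sub_zero, h2v] at hgap
  rw [sub_zero]
  have ht : 0 ≤ ‖res‖ * ‖ystar‖ := by positivity
  have hB : γ / 2 * D + 4 * ‖v‖ ^ 2 / (2 * γ) = (γ * D + 4 * ‖v‖ ^ 2 / γ) / 2 := by
    field_simp
  have hi : ‖res‖ * ‖ystar‖ ≤ (γ * D + 4 * ‖v‖ ^ 2 / γ) / (2 * Ak) := by
    rw [le_div_iff₀ (by positivity)]
    nlinarith [mul_nonneg hAk.le (by linarith : 0 ≤ G + ‖res‖ * ‖ystar‖)]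
  refine ⟨hi, by linarith, ?_⟩
  rw [le_div_iff₀ hAk]
  nlinarith [mul_nonneg hAk.le ht]

end Lagrangian

section Run

variable {n d m : ℕ}

structure IsCLVRRun (A : Matrix (Fin n) (Fin d) ℝ) (b : EuclideanSpace ℝ (Fin n))
    (c : EuclideanSpace ℝ (Fin d)) (X : Set (EuclideanSpace ℝ (Fin d)))
    (r : EuclideanSpace ℝ (Fin d) → ℝ) (S : Fin n → Fin m) (γ : ℝ) (a : ℕ → ℝ)
    (x : ℕ → (ℕ → Fin m) → EuclideanSpace ℝ (Fin d))
    (y ybar : ℕ → (ℕ → Fin m) → EuclideanSpace ℝ (Fin n))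
    (x0 : EuclideanSpace ℝ (Fin d)) (y0 : EuclideanSpace ℝ (Fin n)) : Prop where
  x_zero : ∀ ω, x 0 ω = x0
  y_zero : ∀ ω, y 0 ω = y0
  ybar_zero : ∀ ω, ybar 0 ω = y0
  x_min : ∀ k, 1 ≤ k → ∀ ω, x k ω ∈ X ∧ ∀ x' ∈ X,
    dualAvg a (fun i => mvT A (ybar (i - 1) ω) + c) r γ x0 k (x k ω)
      ≤ dualAvg a (fun i => mvT A (ybar (i - 1) ω) + c) r γ x0 k x'
  y_succ : ∀ k, 1 ≤ k → ∀ ω, ∀ i : Fin n,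
    y k ω i = if S i = ω (k - 1) then y (k - 1) ω i + γ * m * a k * (mv A (x k ω) i - b i)
      else y (k - 1) ω i
  ybar_succ : ∀ k, 1 ≤ k → ∀ ω,
    ybar k ω = y k ω + (m * a k / a (k + 1)) • (y k ω - y (k - 1) ω)

namespace IsCLVRRun

variable {A : Matrix (Fin n) (Fin d) ℝ} {b : EuclideanSpace ℝ (Fin n)}
  {c : EuclideanSpace ℝ (Fin d)} {X : Set (EuclideanSpace ℝ (Fin d))}
  {r : EuclideanSpace ℝ (Fin d) → ℝ} {S : Fin n → Fin m} {γ : ℝ} {a : ℕ → ℝ}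
  {x : ℕ → (ℕ → Fin m) → EuclideanSpace ℝ (Fin d)}
  {y ybar : ℕ → (ℕ → Fin m) → EuclideanSpace ℝ (Fin n)}
  {x0 : EuclideanSpace ℝ (Fin d)} {y0 : EuclideanSpace ℝ (Fin n)}
  (h : IsCLVRRun A b c X r S γ a x y ybar x0 y0)
include h

lemma y_succ_eq {k : ℕ} (hk : 1 ≤ k) (ω : ℕ → Fin m) :
    y k ω = y (k - 1) ω + (γ * m * a k) • blockProj S (ω (k - 1)) (mv A (x k ω) - b) := by
  ext i
  rw [h.y_succ k hk ω i]
  by_cases hi : S i = ω (k - 1) <;> simp [blockProj, hi]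

lemma isMinOn_x {k : ℕ} (hk : 1 ≤ k) (ω : ℕ → Fin m) :
    x k ω ∈ X ∧ IsMinOn (dualAvg a (fun i => mvT A (ybar (i - 1) ω) + c) r γ x0 k) X (x k ω) :=
  ⟨(h.x_min k hk ω).1, isMinOn_iff.2 (h.x_min k hk ω).2⟩

/-- `x_k` is the unique minimizer of a strongly convex function of `ȳ_0, …, ȳ_{k-1}`. -/
lemma dependsOnFirst {σ : ℝ} (hr : StrongConvexOn X σ r) (hσ : 0 ≤ σ) (hγ : 0 < γ)
    (ha : ∀ i, 0 ≤ a i) (k : ℕ) :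
    DependsOnFirst (k - 1) (x k) ∧ DependsOnFirst k (y k) ∧ DependsOnFirst k (ybar k) := by
  refine Nat.strong_induction_on k fun k ih => ?_
  rcases k with _ | k
  · exact ⟨fun ω ω' _ => by rw [h.x_zero, h.x_zero], fun ω ω' _ => by rw [h.y_zero, h.y_zero],
      fun ω ω' _ => by rw [h.ybar_zero, h.ybar_zero]⟩
  have hx : DependsOnFirst k (x (k + 1)) := by
    intro ω ω' hω
    have hψ : dualAvg a (fun i => mvT A (ybar (i - 1) ω) + c) r γ x0 (k + 1)
        = dualAvg a (fun i => mvT A (ybar (i - 1) ω') + c) r γ x0 (k + 1) :=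
      dualAvg_congr fun i hi => by
        have hi := mem_Icc.1 hi
        rw [(ih (i - 1) (by omega)).2.2 ω ω' fun s hs => hω s (by omega)]
    have hA : 0 ≤ ∑ i ∈ Icc 1 (k + 1), a i := sum_nonneg fun i _ => ha i
    have hsc := (strongConvexOn_dualAvg (g := fun i => mvT A (ybar (i - 1) ω') + c) (x₀ := x0)
      hr ha hγ.le (k + 1)).strictConvexOn (by positivity)
    obtain ⟨hxω, hminω⟩ := h.isMinOn_x (k := k + 1) (by omega) ω
    obtain ⟨hxω', hminω'⟩ := h.isMinOn_x (k := k + 1) (by omega) ω'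
    rw [hψ] at hminω
    exact hsc.eq_of_isMinOn hminω hminω' hxω hxω'
  have hy : DependsOnFirst (k + 1) (y (k + 1)) := by
    intro ω ω' hω
    rw [h.y_succ_eq (k := k + 1) (by omega) ω, h.y_succ_eq (k := k + 1) (by omega) ω',
      Nat.add_sub_cancel, (ih k (by omega)).2.1 ω ω' fun s hs => hω s (by omega),
      hx ω ω' fun s hs => hω s (by omega), hω k (by omega)]
  refine ⟨hx, hy, fun ω ω' hω => ?_⟩
  rw [h.ybar_succ (k + 1) (by omega), h.ybar_succ (k + 1) (by omega), Nat.add_sub_cancel,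
    hy ω ω' hω, (ih k (by omega)).2.1 ω ω' fun s hs => hω s (by omega)]

variable {σ L : ℝ} {Aseq : ℕ → ℝ} {xstar : EuclideanSpace ℝ (Fin d)}

lemma sum_gap_add_sq_norm_le (hr : StrongConvexOn X σ r) (hγ : 0 < γ)
    (hs : IsStepSchedule σ γ L m a Aseq) (hσ : 0 ≤ σ) (hL : 0 ≤ L) (hxstar : xstar ∈ X)
    (hfeas : mv A xstar = b) (k : ℕ) (ω : ℕ → Fin m) :
    ∑ i ∈ Icc 1 k, (a i * (⟪c, x i ω⟫ + r (x i ω) - (⟪c, xstar⟫ + r xstar)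
          + ⟪ybar (i - 1) ω, mv A (x i ω) - b⟫)
        + (γ + σ * Aseq (i - 1)) / 2 * ‖x i ω - x (i - 1) ω‖ ^ 2)
      + (γ + σ * Aseq k) / 2 * ‖xstar - x k ω‖ ^ 2 ≤ γ / 2 * ‖xstar - x0‖ ^ 2 := by
  have hdesc := sum_add_sq_norm_sub_le_dualAvg (μ := fun i => γ + σ * Aseq i)
    (x := fun i => x i ω) (fun i => by have := hs.A_nonneg hL i; positivity)
    (by simp [hs.A_zero]) (h.x_zero ω)
    (fun i _ => by rw [hs.A_eq_sum]; exact strongConvexOn_dualAvg hr (hs.a_nonneg hL) hγ.le i)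
    (fun i hi => h.isMinOn_x hi ω) k hxstar
  have hterm : ∀ i, ⟪x i ω, mvT A (ybar (i - 1) ω) + c⟫ + r (x i ω)
      = ⟪xstar, mvT A (ybar (i - 1) ω) + c⟫ + r xstar
        + (⟪c, x i ω⟫ + r (x i ω) - (⟪c, xstar⟫ + r xstar)
          + ⟪ybar (i - 1) ω, mv A (x i ω) - b⟫) := by
    intro i
    simp only [inner_add_right, inner_mvT, inner_sub_right, hfeas, real_inner_comm c]
    ring
  simp only [dualAvg, hterm, mul_add, sum_add_distrib] at hdesc ⊢
  linarith

lemma average_mem (hm : 0 < m) {k : ℕ} (hs : IsStepSchedule σ γ L m a Aseq) (hσ : 0 ≤ σ)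
    (hγ : 0 < γ) (hL : 0 < L) (hX : Convex ℝ X) (hk : 1 ≤ k)
    {xt : (ℕ → Fin m) → EuclideanSpace ℝ (Fin d)}
    (hxt : ∀ ω, xt ω = (Aseq k)⁻¹ • ∑ i ∈ Icc 1 k, a i • x i ω) (ω : ℕ → Fin m) :
    xt ω ∈ X := by
  rw [hxt, hs.inv_smul_sum_eq_centerMass]
  refine hX.centerMass_mem (fun i _ => hs.a_nonneg hL.le i) ?_
    fun i hi => (h.x_min i (mem_Icc.1 hi).1 ω).1
  rw [← hs.A_eq_sum]
  exact hs.A_pos hσ hγ.le hL hm hk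

variable (hm : 0 < m) {k : ℕ}

lemma expE_inner_sub_y_eq (hγ : 0 < γ)
    (hdep : ∀ i, DependsOnFirst (i - 1) (x i) ∧ DependsOnFirst i (y i)) {i : ℕ} (hi : 1 ≤ i)
    (hik : i ≤ k) (w : EuclideanSpace ℝ (Fin n)) :
    a i * expE hm k (fun ω => ⟪w - y (i - 1) ω, mv A (x i ω) - b⟫)
      = (expE hm k (fun ω => ‖w - y (i - 1) ω‖ ^ 2) - expE hm k (fun ω => ‖w - y i ω‖ ^ 2))
          / (2 * γ)
        + γ * m * a i ^ 2 / 2 * expE hm k (fun ω => ‖mv A (x i ω) - b‖ ^ 2) := by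
  have hyi : ∀ ω, w - y i ω = (w - y (i - 1) ω)
      - (γ * m * a i) • blockProj S (ω (i - 1)) (mv A (x i ω) - b) := by
    intro ω
    rw [h.y_succ_eq hi]
    abel
  have hstep := expE_norm_sub_smul_blockProj_sq hm S (t := i - 1) (k := k) (by omega)
    ((hdep (i - 1)).2.comp fun y => w - y) ((hdep i).1.comp fun z => mv A z - b) (γ * m * a i)
  simp only [← hyi] at hstep
  have hm' : (m : ℝ) ≠ 0 := by positivity
  rw [hstep]
  field_simp
  ring

lemma neg_expE_inner_extrapolation_le (hs : IsStepSchedule σ γ L m a Aseq) (hσ : 0 ≤ σ)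
    (hγ : 0 < γ) (hL : 0 < L) (hLb : ∀ j z, ‖blockProj S j (mv A z)‖ ≤ L * ‖z‖)
    (hdep : ∀ i, DependsOnFirst (i - 1) (x i)) {i : ℕ} (hi : 2 ≤ i) (hik : i ≤ k) :
    -(m * a (i - 1) * expE hm k (fun ω => ⟪y (i - 1) ω - y (i - 2) ω, mv A (x i ω) - b⟫))
      ≤ (γ + σ * Aseq (i - 1)) / 2 * expE hm k (fun ω => ‖x i ω - x (i - 1) ω‖ ^ 2)
        - 3 / 4 * γ * m * a (i - 1) ^ 2
          * expE hm k (fun ω => ‖mv A (x (i - 1) ω) - b‖ ^ 2) := by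
  set B := γ * m ^ 2 * a (i - 1) ^ 2
  have hB : 0 ≤ B := by positivity
  have hμ : 2 * B * L ^ 2 ≤ γ + σ * Aseq (i - 1) := by
    have ha : a (i - 1) ^ 2 ≤ a i ^ 2 :=
      pow_le_pow_left₀ (hs.a_nonneg hL.le _) (hs.a_mono hσ hγ.le hL.le (Nat.sub_le i 1)) 2
    have hsq := hs.sq_a_succ hσ hγ hL hm (i - 1)
    rw [Nat.sub_add_cancel (by omega)] at hsq
    have : 0 ≤ 2 * γ * L ^ 2 * m ^ 2 := by positivity
    nlinarith [mul_le_mul_of_nonneg_left ha this]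
  have hpt : ∀ ω, -(m * a (i - 1) * ⟪y (i - 1) ω - y (i - 2) ω, mv A (x i ω) - b⟫)
      ≤ (γ + σ * Aseq (i - 1)) / 2 * ‖x i ω - x (i - 1) ω‖ ^ 2
        - 3 / 4 * B * ‖blockProj S (ω (i - 2)) (mv A (x (i - 1) ω) - b)‖ ^ 2 := by
    intro ω
    have hy : y (i - 1) ω - y (i - 2) ω
        = (γ * m * a (i - 1)) • blockProj S (ω (i - 2)) (mv A (x (i - 1) ω) - b) := by
      rw [h.y_succ_eq (k := i - 1) (by omega), show i - 1 - 1 = i - 2 by omega,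
        add_sub_cancel_left]
    have hx : mv A (x i ω) - b = (mv A (x (i - 1) ω) - b) + mv A (x i ω - x (i - 1) ω) := by
      rw [mv_sub]
      abel
    have := neg_mul_inner_blockProj_le hLb (ω (i - 2)) (mv A (x (i - 1) ω) - b)
      (x i ω - x (i - 1) ω) hB hμ
    rw [hy, hx, real_inner_smul_left]
    convert this using 2
    ring
  have hq := (hdep (i - 1)).comp fun z => mv A z - b
  rw [show i - 1 - 1 = i - 2 by omega] at hq
  have hmono := expE_mono hm (k := k) hpt
  simp only [expE_sub, expE_neg, expE_const_mul] at hmono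
  rw [expE_norm_blockProj_sq hm S (by omega) hq] at hmono
  have hm' : (m : ℝ) ≠ 0 := by positivity
  convert hmono using 2
  simp only [B]
  field_simp

lemma expE_inner_sub_ybar_le (hs : IsStepSchedule σ γ L m a Aseq) (hσ : 0 ≤ σ)
    (hγ : 0 < γ) (hL : 0 < L) (hLb : ∀ j z, ‖blockProj S j (mv A z)‖ ≤ L * ‖z‖)
    (hdep : ∀ i, DependsOnFirst (i - 1) (x i) ∧ DependsOnFirst i (y i)) {i : ℕ} (hi : 1 ≤ i)
    (hik : i ≤ k) (w : EuclideanSpace ℝ (Fin n)) :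
    a i * expE hm k (fun ω => ⟪w - ybar (i - 1) ω, mv A (x i ω) - b⟫)
      ≤ (expE hm k (fun ω => ‖w - y (i - 1) ω‖ ^ 2) - expE hm k (fun ω => ‖w - y i ω‖ ^ 2))
          / (2 * γ)
        + (γ * m * a i ^ 2 / 2 * expE hm k (fun ω => ‖mv A (x i ω) - b‖ ^ 2)
          - γ * m * a (i - 1) ^ 2 / 2 * expE hm k (fun ω => ‖mv A (x (i - 1) ω) - b‖ ^ 2))
        + (γ + σ * Aseq (i - 1)) / 2 * expE hm k (fun ω => ‖x i ω - x (i - 1) ω‖ ^ 2) := by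
  have hdual := h.expE_inner_sub_y_eq hm hγ hdep hi hik w
  have hμ : 0 ≤ γ + σ * Aseq (i - 1) := by have := hs.A_nonneg hL.le (i - 1); positivity
  have hS : 0 ≤ expE hm k (fun ω => ‖x i ω - x (i - 1) ω‖ ^ 2) :=
    expE_nonneg hm fun _ => sq_nonneg _
  have hR : 0 ≤ γ * m * a (i - 1) ^ 2 * expE hm k (fun ω => ‖mv A (x (i - 1) ω) - b‖ ^ 2) :=
    mul_nonneg (by positivity) (expE_nonneg hm fun _ => sq_nonneg _)
  obtain rfl | hi2 := eq_or_lt_of_le hi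
  · have hy : ∀ ω, ybar (1 - 1) ω = y (1 - 1) ω := fun ω => by
      rw [Nat.sub_self, h.ybar_zero, h.y_zero]
    simp only [hy, hdual, Nat.sub_self, hs.a_zero]
    nlinarith [mul_nonneg hμ hS]
  have hybar : ∀ ω, a i * ⟪w - ybar (i - 1) ω, mv A (x i ω) - b⟫
      = a i * ⟪w - y (i - 1) ω, mv A (x i ω) - b⟫
        - m * a (i - 1) * ⟪y (i - 1) ω - y (i - 2) ω, mv A (x i ω) - b⟫ := by
    intro ω
    have hai : a i ≠ 0 := (Nat.sub_add_cancel hi ▸ hs.a_succ_pos hσ hγ.le hL hm (i - 1)).ne'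
    rw [h.ybar_succ (i - 1) (by omega), Nat.sub_add_cancel hi, show i - 1 - 1 = i - 2 by omega,
      sub_add_eq_sub_sub, inner_sub_left, real_inner_smul_left]
    field_simp
  have hext := h.neg_expE_inner_extrapolation_le hm hs hσ hγ hL hLb (fun i => (hdep i).1) hi2 hik
  rw [← expE_const_mul]
  simp only [hybar, expE_sub, expE_const_mul]
  linarith

lemma sum_expE_inner_sub_ybar_le (hs : IsStepSchedule σ γ L m a Aseq) (hσ : 0 ≤ σ)
    (hγ : 0 < γ) (hL : 0 < L) (hLb : ∀ j z, ‖blockProj S j (mv A z)‖ ≤ L * ‖z‖)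
    (hdep : ∀ i, DependsOnFirst (i - 1) (x i) ∧ DependsOnFirst i (y i))
    (w : EuclideanSpace ℝ (Fin n)) :
    ∑ i ∈ Icc 1 k, a i * expE hm k (fun ω => ⟪w - ybar (i - 1) ω, mv A (x i ω) - b⟫)
      ≤ ‖w - y0‖ ^ 2 / (2 * γ)
        + γ * m * a k ^ 2 / 2 * expE hm k (fun ω => ‖mv A (x k ω) - b‖ ^ 2)
        + ∑ i ∈ Icc 1 k,
            (γ + σ * Aseq (i - 1)) / 2 * expE hm k (fun ω => ‖x i ω - x (i - 1) ω‖ ^ 2) := by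
  refine (sum_le_sum fun i hi => h.expE_inner_sub_ybar_le hm hs hσ hγ hL hLb hdep
    (mem_Icc.1 hi).1 (mem_Icc.1 hi).2 w).trans ?_
  have hF := sum_Icc_sub_pred (fun i => expE hm k fun ω => ‖w - y i ω‖ ^ 2) k
  have hc := sum_Icc_sub_pred
    (fun i => γ * m * a i ^ 2 / 2 * expE hm k fun ω => ‖mv A (x i ω) - b‖ ^ 2) k
  simp only [h.y_zero, expE_const, hs.a_zero] at hF hc
  have hFk : 0 ≤ expE hm k fun ω => ‖w - y k ω‖ ^ 2 := expE_nonneg hm fun _ => sq_nonneg _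
  have hF' : ∑ i ∈ Icc 1 k, ((expE hm k fun ω => ‖w - y (i - 1) ω‖ ^ 2)
      - expE hm k fun ω => ‖w - y i ω‖ ^ 2) ≤ ‖w - y0‖ ^ 2 := by
    rw [← neg_le_neg_iff, ← sum_neg_distrib]
    simp only [neg_sub, hF]
    linarith
  rw [sum_add_distrib, sum_add_distrib, ← sum_div, hc]
  have := div_le_div_of_nonneg_right hF' (by positivity : (0 : ℝ) ≤ 2 * γ)
  linarith

lemma expE_sum_gap_le (hr : StrongConvexOn X σ r) (hs : IsStepSchedule σ γ L m a Aseq)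
    (hσ : 0 ≤ σ) (hγ : 0 < γ) (hL : 0 < L) (hLb : ∀ j z, ‖blockProj S j (mv A z)‖ ≤ L * ‖z‖)
    (hxstar : xstar ∈ X) (hfeas : mv A xstar = b) (w : EuclideanSpace ℝ (Fin n)) :
    expE hm k (fun ω => ∑ i ∈ Icc 1 k, a i * (⟪c, x i ω⟫ + r (x i ω)
        - (⟪c, xstar⟫ + r xstar) + ⟪w, mv A (x i ω) - b⟫))
      ≤ γ / 2 * ‖xstar - x0‖ ^ 2 + ‖w - y0‖ ^ 2 / (2 * γ) := by
  have hdep := h.dependsOnFirst hr hσ hγ (hs.a_nonneg hL.le)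
  have hpath := (expE_mono hm (k := k)
    (h.sum_gap_add_sq_norm_le hr hγ hs hσ hL.le hxstar hfeas k)).trans_eq (expE_const hm _)
  have hdual := h.sum_expE_inner_sub_ybar_le hm (k := k) hs hσ hγ hL hLb
    (fun i => ⟨(hdep i).1, (hdep i).2.1⟩) w
  have habsorb : γ * m * a k ^ 2 / 2 * expE hm k (fun ω => ‖mv A (x k ω) - b‖ ^ 2)
      ≤ (γ + σ * Aseq k) / 2 * expE hm k (fun ω => ‖xstar - x k ω‖ ^ 2) := by
    rw [← expE_const_mul, ← expE_const_mul]
    refine expE_mono hm fun ω => ?_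
    rw [← hfeas, ← mv_sub, norm_sub_rev xstar]
    exact hs.mul_norm_mv_sq_le hσ hγ hL hm hLb k _
  have hsplit : ∀ ω, ∑ i ∈ Icc 1 k, a i * (⟪c, x i ω⟫ + r (x i ω)
        - (⟪c, xstar⟫ + r xstar) + ⟪w, mv A (x i ω) - b⟫)
      = (∑ i ∈ Icc 1 k, (a i * (⟪c, x i ω⟫ + r (x i ω) - (⟪c, xstar⟫ + r xstar)
            + ⟪ybar (i - 1) ω, mv A (x i ω) - b⟫)
          + (γ + σ * Aseq (i - 1)) / 2 * ‖x i ω - x (i - 1) ω‖ ^ 2)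
          + (γ + σ * Aseq k) / 2 * ‖xstar - x k ω‖ ^ 2)
        + ∑ i ∈ Icc 1 k, a i * ⟪w - ybar (i - 1) ω, mv A (x i ω) - b⟫
        - ∑ i ∈ Icc 1 k, (γ + σ * Aseq (i - 1)) / 2 * ‖x i ω - x (i - 1) ω‖ ^ 2
        - (γ + σ * Aseq k) / 2 * ‖xstar - x k ω‖ ^ 2 := by
    intro ω
    simp only [inner_sub_left, mul_add, mul_sub, sum_add_distrib, sum_sub_distrib]
    ring
  simp only [expE_add, expE_sub, expE_sum, expE_const_mul] at hpath
  simp only [hsplit, expE_add, expE_sub, expE_sum, expE_const_mul]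
  linarith

/-- The master bound: by Jensen's inequality, twice (over the iterations and over the random
indices), the expected gap bound transfers to the averaged iterate. -/
lemma gap_expVec_le (hr : StrongConvexOn X σ r) (hs : IsStepSchedule σ γ L m a Aseq)
    (hσ : 0 ≤ σ) (hγ : 0 < γ) (hL : 0 < L) (hLb : ∀ j z, ‖blockProj S j (mv A z)‖ ≤ L * ‖z‖)
    (hxstar : xstar ∈ X) (hfeas : mv A xstar = b) (hk : 1 ≤ k)
    {xt : (ℕ → Fin m) → EuclideanSpace ℝ (Fin d)}
    (hxt : ∀ ω, xt ω = (Aseq k)⁻¹ • ∑ i ∈ Icc 1 k, a i • x i ω) (w : EuclideanSpace ℝ (Fin n)) :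
    Aseq k * (⟪c, expVec hm k xt⟫ + r (expVec hm k xt) - (⟪c, xstar⟫ + r xstar)
        + ⟪w, mv A (expVec hm k xt) - b⟫)
      ≤ γ / 2 * ‖xstar - x0‖ ^ 2 + ‖w - y0‖ ^ 2 / (2 * γ) := by
  set G : EuclideanSpace ℝ (Fin d) → ℝ :=
    fun z => ⟪c, z⟫ + r z - (⟪c, xstar⟫ + r xstar) + ⟪w, mv A z - b⟫
  have hG : ConvexOn ℝ X G :=
    ((convexOn_inner_add_const hr.1 (c + mvT A w) (-(⟪c, xstar⟫ + r xstar) - ⟪w, b⟫)).add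
      (hr.convexOn fun _ => by positivity)).congr fun z _ => by
        simp only [G, Pi.add_apply, inner_add_left, real_inner_comm z, inner_mvT, inner_sub_right]
        ring
  have hApos := hs.A_pos hσ hγ.le hL hm hk
  have hxt_mem := h.average_mem hm hs hσ hγ hL hr.1 hk hxt
  have hjensen : ∀ ω, Aseq k * G (xt ω) ≤ ∑ i ∈ Icc 1 k, a i * G (x i ω) := by
    intro ω
    have := hG.map_centerMass_le (t := Icc 1 k) (fun i _ => hs.a_nonneg hL.le i)
      (hs.A_eq_sum k ▸ hApos) fun i hi => (h.x_min i (mem_Icc.1 hi).1 ω).1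
    rw [← hs.inv_smul_sum_eq_centerMass, ← hxt, centerMass, ← hs.A_eq_sum, smul_eq_mul,
      le_inv_mul_iff₀ hApos] at this
    simpa only [Function.comp, smul_eq_mul] using this
  calc Aseq k * G (expVec hm k xt) ≤ Aseq k * expE hm k (fun ω => G (xt ω)) :=
        mul_le_mul_of_nonneg_left (hG.map_expVec_le hm hxt_mem) hApos.le
    _ = expE hm k (fun ω => Aseq k * G (xt ω)) := (expE_const_mul hm _).symm
    _ ≤ expE hm k (fun ω => ∑ i ∈ Icc 1 k, a i * G (x i ω)) := expE_mono hm hjensen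
    _ ≤ _ := h.expE_sum_gap_le hm hr hs hσ hγ hL hLb hxstar hfeas w

end IsCLVRRun

end Run

end CLVR

theorem clvr_objective_constraint_bounds_general
    (n d m : ℕ) (hm : 0 < m)
    (A : Matrix (Fin n) (Fin d) ℝ) (b : EuclideanSpace ℝ (Fin n))
    (c : EuclideanSpace ℝ (Fin d))
    (X : Set (EuclideanSpace ℝ (Fin d)))
    (r : EuclideanSpace ℝ (Fin d) → ℝ) (σ : ℝ) (hσ : 0 ≤ σ)
    (hrstrong : StrongConvexOn X σ r)
    -- the partition of the rows into m blocks
    (S : Fin n → Fin m)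
    (Lhat : ℝ) (hLhat : 0 < Lhat)
    (hLhatBound : ∀ (j : Fin m) (x : EuclideanSpace ℝ (Fin d)),
      Real.sqrt (∑ i ∈ Finset.univ.filter (fun i => S i = j), (mv A x i) ^ 2) ≤ Lhat * ‖x‖)
    (γ : ℝ) (hγ : 0 < γ)
    -- the Lagrangian
    (Lag : EuclideanSpace ℝ (Fin d) → EuclideanSpace ℝ (Fin n) → ℝ)
    (hLag : ∀ x y, Lag x y = ⟪c, x⟫ + r x + ⟪y, mv A x⟫ - ⟪y, b⟫)
    -- a saddle point
    (xstar : EuclideanSpace ℝ (Fin d)) (ystar : EuclideanSpace ℝ (Fin n))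
    (hxstarX : xstar ∈ X)
    (hsaddle : ∀ x ∈ X, ∀ y : EuclideanSpace ℝ (Fin n),
      Lag xstar y ≤ Lag xstar ystar ∧ Lag xstar ystar ≤ Lag x ystar)
    -- step sizes
    (a Aseq : ℕ → ℝ)
    (ha0 : a 0 = 0) (hA0 : Aseq 0 = 0)
    (ha1 : a 1 = 1 / (Real.sqrt 2 * Lhat * m))
    (harec : ∀ k, 1 ≤ k →
      a (k + 1) = Real.sqrt (1 + σ * Aseq k / γ) / (Real.sqrt 2 * Lhat * m))
    (hArec : ∀ k, Aseq (k + 1) = Aseq k + a (k + 1))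
    -- the iterates, as functions of the sequence ω of random block indices
    -- (ω (k-1) is the index j_k ∈ [m] drawn at iteration k)
    (x : ℕ → (ℕ → Fin m) → EuclideanSpace ℝ (Fin d))
    (y ybar : ℕ → (ℕ → Fin m) → EuclideanSpace ℝ (Fin n))
    (x0 : EuclideanSpace ℝ (Fin d)) (y0 : EuclideanSpace ℝ (Fin n))
    (hx0 : ∀ ω, x 0 ω = x0)
    (hy0 : ∀ ω, y 0 ω = y0) (hybar0 : ∀ ω, ybar 0 ω = y0)
    (hy0zero : y0 = 0)
    -- primal update: x_k is the minimizer over X of the dual-averaging objective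
    (hxmin : ∀ k, 1 ≤ k → ∀ ω, x k ω ∈ X ∧ ∀ x' ∈ X,
      ((∑ i ∈ Finset.Icc 1 k, a i * (⟪x k ω, mvT A (ybar (i - 1) ω) + c⟫ + r (x k ω)))
          + γ / 2 * ‖x k ω - x0‖ ^ 2)
        ≤ ((∑ i ∈ Finset.Icc 1 k, a i * (⟪x', mvT A (ybar (i - 1) ω) + c⟫ + r x'))
          + γ / 2 * ‖x' - x0‖ ^ 2))
    -- dual update on the randomly drawn block j_k = ω (k-1)
    (hyupd : ∀ k, 1 ≤ k → ∀ ω, ∀ i : Fin n,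
      y k ω i = if S i = ω (k - 1)
        then y (k - 1) ω i + γ * m * a k * (mv A (x k ω) i - b i)
        else y (k - 1) ω i)
    -- dual extrapolation
    (hybar : ∀ k, 1 ≤ k → ∀ ω,
      ybar k ω = y k ω + (m * a k / a (k + 1)) • (y k ω - y (k - 1) ω))
    -- averaged iterates
    (xt : ℕ → (ℕ → Fin m) → EuclideanSpace ℝ (Fin d))
    (hxt : ∀ k ω, xt k ω = (Aseq k)⁻¹ • ∑ i ∈ Finset.Icc 1 k, a i • x i ω) :
    ∀ k : ℕ, 1 ≤ k →
      mv A (expVec hm k (fun ω => xt k ω)) ≠ b →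
      ∀ v : EuclideanSpace ℝ (Fin n),
        ‖mv A (expVec hm k (fun ω => xt k ω)) - b‖ • v
            = ‖ystar‖ • (mv A (expVec hm k (fun ω => xt k ω)) - b) →
        (‖mv A (expVec hm k (fun ω => xt k ω)) - b‖ * ‖ystar‖
            ≤ (γ * ‖xstar - x0‖ ^ 2 + 4 * ‖v - y0‖ ^ 2 / γ) / (2 * Aseq k)) ∧
        (-((γ * ‖xstar - x0‖ ^ 2 + 4 * ‖v - y0‖ ^ 2 / γ) / (2 * Aseq k))
            ≤ (⟪c, expVec hm k (fun ω => xt k ω)⟫ + r (expVec hm k (fun ω => xt k ω)))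
              - (⟪c, xstar⟫ + r xstar)) ∧
        ((⟪c, expVec hm k (fun ω => xt k ω)⟫ + r (expVec hm k (fun ω => xt k ω)))
              - (⟪c, xstar⟫ + r xstar)
            ≤ (γ * ‖xstar - x0‖ ^ 2 + 4 * ‖v - y0‖ ^ 2 / γ) / Aseq k) := by
  intro k hk _ v hv
  have hrun : CLVR.IsCLVRRun A b c X r S γ a x y ybar x0 y0 :=
    ⟨hx0, hy0, hybar0, hxmin, hyupd, hybar⟩
  have hs : CLVR.IsStepSchedule σ γ Lhat m a Aseq := ⟨ha0, hA0, ha1, harec, hArec⟩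
  have hLb : ∀ j z, ‖CLVR.blockProj S j (mv A z)‖ ≤ Lhat * ‖z‖ := fun j z =>
    (CLVR.norm_blockProj S j _).trans_le (hLhatBound j z)
  have hfeas := CLVR.mv_eq_of_le_lagrangian hLag fun y => (hsaddle xstar hxstarX y).1
  have hmem := CLVR.expVec_mem hm (k := k) hrstrong.1
    (hrun.average_mem hm hs hσ hγ hLhat hrstrong.1 hk (hxt k))
  exact CLVR.bounds_of_gap_le (hs.A_pos hσ hγ.le hLhat hm hk) hγ hy0zero hv
    (CLVR.neg_inner_le_of_lagrangian_le hLag hfeas (hsaddle _ hmem ystar).2)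
    (hrun.gap_expVec_le hm hrstrong hs hσ hγ hLhat hLb hxstarX hfeas hk (hxt k) _)

/-- Corollary (objective/feasibility guarantees of CLVR): with `y₀ = 0`, `u = x*` and
`v` determined by `‖A E[x̃_k] − b‖ · v = ‖y*‖ (A E[x̃_k] − b)`, for all `k ≥ 1` one has
`‖A E[x̃_k] − b‖·‖y*‖ ≤ (γ‖u − x₀‖² + 4‖v − y₀‖²/γ)/(2A_k)` and the two-sided bound on
`(cᵀE[x̃_k] + r(E[x̃_k])) − (cᵀx* + r(x*))`. -/
theorem clvr_objective_constraint_bounds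
    (n d m : ℕ) (hm : 0 < m)
    (A : Matrix (Fin n) (Fin d) ℝ) (b : EuclideanSpace ℝ (Fin n))
    (c : EuclideanSpace ℝ (Fin d))
    (X : Set (EuclideanSpace ℝ (Fin d)))
    (hXne : X.Nonempty) (hXc : IsClosed X) (hXconv : Convex ℝ X)
    (r : EuclideanSpace ℝ (Fin d) → ℝ) (σ : ℝ) (hσ : 0 ≤ σ)
    (hrconv : ConvexOn ℝ Set.univ r) (hrstrong : StrongConvexOn X σ r)
    -- the partition of the rows into m blocks
    (S : Fin n → Fin m) (hS : Function.Surjective S)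
    (Lhat : ℝ) (hLhat : 0 < Lhat)
    (hLhatBound : ∀ (j : Fin m) (x : EuclideanSpace ℝ (Fin d)),
      Real.sqrt (∑ i ∈ Finset.univ.filter (fun i => S i = j), (mv A x i) ^ 2) ≤ Lhat * ‖x‖)
    (γ : ℝ) (hγ : 0 < γ)
    -- the Lagrangian
    (Lag : EuclideanSpace ℝ (Fin d) → EuclideanSpace ℝ (Fin n) → ℝ)
    (hLag : ∀ x y, Lag x y = ⟪c, x⟫ + r x + ⟪y, mv A x⟫ - ⟪y, b⟫)
    -- a saddle point
    (xstar : EuclideanSpace ℝ (Fin d)) (ystar : EuclideanSpace ℝ (Fin n))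
    (hxstarX : xstar ∈ X)
    (hsaddle : ∀ x ∈ X, ∀ y : EuclideanSpace ℝ (Fin n),
      Lag xstar y ≤ Lag xstar ystar ∧ Lag xstar ystar ≤ Lag x ystar)
    -- step sizes
    (a Aseq : ℕ → ℝ)
    (ha0 : a 0 = 0) (hA0 : Aseq 0 = 0)
    (ha1 : a 1 = 1 / (Real.sqrt 2 * Lhat * m))
    (harec : ∀ k, 1 ≤ k →
      a (k + 1) = Real.sqrt (1 + σ * Aseq k / γ) / (Real.sqrt 2 * Lhat * m))
    (hArec : ∀ k, Aseq (k + 1) = Aseq k + a (k + 1))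
    -- the iterates, as functions of the sequence ω of random block indices
    -- (ω (k-1) is the index j_k ∈ [m] drawn at iteration k)
    (x : ℕ → (ℕ → Fin m) → EuclideanSpace ℝ (Fin d))
    (y ybar : ℕ → (ℕ → Fin m) → EuclideanSpace ℝ (Fin n))
    (x0 : EuclideanSpace ℝ (Fin d)) (y0 : EuclideanSpace ℝ (Fin n))
    (hx0X : x0 ∈ X) (hx0 : ∀ ω, x 0 ω = x0)
    (hy0 : ∀ ω, y 0 ω = y0) (hybar0 : ∀ ω, ybar 0 ω = y0)
    (hy0zero : y0 = 0)
    -- primal update: x_k is the minimizer over X of the dual-averaging objective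
    (hxmin : ∀ k, 1 ≤ k → ∀ ω, x k ω ∈ X ∧ ∀ x' ∈ X,
      ((∑ i ∈ Finset.Icc 1 k, a i * (⟪x k ω, mvT A (ybar (i - 1) ω) + c⟫ + r (x k ω)))
          + γ / 2 * ‖x k ω - x0‖ ^ 2)
        ≤ ((∑ i ∈ Finset.Icc 1 k, a i * (⟪x', mvT A (ybar (i - 1) ω) + c⟫ + r x'))
          + γ / 2 * ‖x' - x0‖ ^ 2))
    -- dual update on the randomly drawn block j_k = ω (k-1)
    (hyupd : ∀ k, 1 ≤ k → ∀ ω, ∀ i : Fin n,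
      y k ω i = if S i = ω (k - 1)
        then y (k - 1) ω i + γ * m * a k * (mv A (x k ω) i - b i)
        else y (k - 1) ω i)
    -- dual extrapolation
    (hybar : ∀ k, 1 ≤ k → ∀ ω,
      ybar k ω = y k ω + (m * a k / a (k + 1)) • (y k ω - y (k - 1) ω))
    -- averaged iterates
    (xt : ℕ → (ℕ → Fin m) → EuclideanSpace ℝ (Fin d))
    (yt : ℕ → (ℕ → Fin m) → EuclideanSpace ℝ (Fin n))
    (hxt : ∀ k ω, xt k ω = (Aseq k)⁻¹ • ∑ i ∈ Finset.Icc 1 k, a i • x i ω)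
    (hyt : ∀ k ω, yt k ω = (Aseq k)⁻¹ •
      ∑ i ∈ Finset.Icc 1 k,
        (a i • y i ω + (((m : ℝ) - 1) * a i) • (y i ω - y (i - 1) ω))) :
    ∀ k : ℕ, 1 ≤ k →
      mv A (expVec hm k (fun ω => xt k ω)) ≠ b →
      ∀ v : EuclideanSpace ℝ (Fin n),
        ‖mv A (expVec hm k (fun ω => xt k ω)) - b‖ • v
            = ‖ystar‖ • (mv A (expVec hm k (fun ω => xt k ω)) - b) →
        (‖mv A (expVec hm k (fun ω => xt k ω)) - b‖ * ‖ystar‖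
            ≤ (γ * ‖xstar - x0‖ ^ 2 + 4 * ‖v - y0‖ ^ 2 / γ) / (2 * Aseq k)) ∧
        (-((γ * ‖xstar - x0‖ ^ 2 + 4 * ‖v - y0‖ ^ 2 / γ) / (2 * Aseq k))
            ≤ (⟪c, expVec hm k (fun ω => xt k ω)⟫ + r (expVec hm k (fun ω => xt k ω)))
              - (⟪c, xstar⟫ + r xstar)) ∧
        ((⟪c, expVec hm k (fun ω => xt k ω)⟫ + r (expVec hm k (fun ω => xt k ω)))
              - (⟪c, xstar⟫ + r xstar)
            ≤ (γ * ‖xstar - x0‖ ^ 2 + 4 * ‖v - y0‖ ^ 2 / γ) / Aseq k) :=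
  clvr_objective_constraint_bounds_general n d m hm A b c X r σ hσ hrstrong S Lhat hLhat hLhatBound
    γ hγ Lag hLag xstar ystar hxstarX hsaddle a Aseq ha0 hA0 ha1 harec hArec x y ybar x0 y0 hx0 hy0
    hybar0 hy0zero hxmin hyupd hybar xt hxt
end

section
/- Fix any realization of the index sequence j₁, j₂, … in [m] and a common initialization x₀ ∈ X, y₀ ∈ ℝⁿ. Then for every k ≥ 1 the iterates (x_k, y_k) produced by the implementation form of CLVR (which maintains z_k = z_{k−1} + (A^{S^{j_k}})ᵀ(y_k^{S^{j_k}} − y_{k−1}^{S^{j_k}}) with z₀ = Aᵀy₀, the state q₀ = a₁(z₀ + c), q_k = q_{k−1} + a_{k+1}(z_k + c) + m a_k(z_k − z_{k−1}), and sets x_k = argmin_{x∈X}{ (A_k/γ) r(x) + (1/2)‖x − x₀ + q_{k−1}/γ‖² }) coincide with the iterates of the analysis form of CLVR (which sets x_k = argmin_{x∈X} { Σ_{i=1}^{k} a_i (⟨x, Aᵀȳ_{i−1} + c⟩ + r(x)) + (γ/2)‖x − x₀‖² } with ȳ_k = y_k + (m a_k/a_{k+1})(y_k − y_{k−1}), ȳ₀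 = y₀). In both forms the dual update is: y_k agrees with y_{k−1} outside block S^{j_k} and y_k^{S^{j_k}} = y_{k−1}^{S^{j_k}} + γ m a_k (A^{S^{j_k}} x_k − b^{S^{j_k}}). -/
open scoped RealInnerProductSpace BigOperators

/-!
Both forms apply the same dual update, so it suffices that their primal steps agree. By induction
`z_k = Aᵀ y_k`, and therefore `q_k = ∑_{i ≤ k+1} a_i (Aᵀ ȳ_{i-1} + c)`: the correction
`m a_k (z_k - z_{k-1})` is exactly `a_{k+1}` times the extrapolation term of `Aᵀ ȳ_k`.
Completing the square, the dual-averaging objective at step `k` is then `γ` times the proximal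
objective plus a constant, and this objective is strongly convex, so both minimizers coincide.
-/

section mvT

variable {n d : ℕ} (A : Matrix (Fin n) (Fin d) ℝ)

lemma mvT_add (u v : EuclideanSpace ℝ (Fin n)) : mvT A (u + v) = mvT A u + mvT A v :=
  map_add (Matrix.toEuclideanLin A.transpose) u v

lemma mvT_sub (u v : EuclideanSpace ℝ (Fin n)) : mvT A (u - v) = mvT A u - mvT A v :=
  map_sub (Matrix.toEuclideanLin A.transpose) u v

lemma mvT_smul (t : ℝ) (u : EuclideanSpace ℝ (Fin n)) : mvT A (t • u) = t • mvT A u :=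
  map_smul (Matrix.toEuclideanLin A.transpose) t u

lemma mvT_apply_eq_add_sum_filter (p : Fin n → Prop) [DecidablePred p]
    {y y' : EuclideanSpace ℝ (Fin n)} (h : ∀ i, ¬ p i → y' i = y i) (col : Fin d) :
    mvT A y' col = mvT A y col + ∑ i ∈ Finset.univ.filter p, A i col * (y' i - y i) := by
  rw [Finset.sum_filter]
  simp only [mvT, ← Finset.sum_add_distrib]
  refine Finset.sum_congr rfl fun i _ => ?_
  split_ifs with hi
  · ring
  · rw [h i hi, add_zero]

end mvT

section Prox

variable {E : Type*} [NormedAddCommGroup E] [InnerProductSpace ℝ E] {s : Set E}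

lemma strictConvexOn_half_mul_norm_sub_sq (hs : Convex ℝ s) (w : E) :
    StrictConvexOn ℝ s fun x => 1 / 2 * ‖x - w‖ ^ 2 := by
  refine (strongConvexOn_iff_convex (m := 1)).2 ?_ |>.strictConvexOn one_pos
  have hlin : (fun x => 1 / 2 * ‖x - w‖ ^ 2 - 1 / 2 * ‖x‖ ^ 2)
      = fun x => -innerₛₗ ℝ w x + 1 / 2 * ‖w‖ ^ 2 := by
    funext x
    rw [norm_sub_sq_real, innerₛₗ_apply_apply, real_inner_comm]
    ring
  rw [hlin]
  exact ((-innerₛₗ ℝ w).convexOn hs).add_const _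

lemma eq_of_isMinOn_add_half_mul_norm_sub_sq (hs : Convex ℝ s) {r : E → ℝ} (hr : ConvexOn ℝ s r)
    {α : ℝ} (hα : 0 ≤ α) (w : E) {u v : E} (hu : u ∈ s) (hv : v ∈ s)
    (hu_min : IsMinOn (fun x => α * r x + 1 / 2 * ‖x - w‖ ^ 2) s u)
    (hv_min : IsMinOn (fun x => α * r x + 1 / 2 * ‖x - w‖ ^ 2) s v) : u = v :=
  ((hr.smul hα).add_strictConvexOn (strictConvexOn_half_mul_norm_sub_sq hs w)).eq_of_isMinOn
    hu_min hv_min hu hv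

lemma sum_mul_inner_add_add_half_mul_norm_sub_sq {ι : Type*} (I : Finset ι) (w : ι → ℝ)
    (g : ι → E) (r : E → ℝ) {γ : ℝ} (hγ : γ ≠ 0) (x0 x : E) :
    ∑ i ∈ I, w i * (⟪x, g i⟫ + r x) + γ / 2 * ‖x - x0‖ ^ 2
      = γ * ((∑ i ∈ I, w i) / γ * r x
          + 1 / 2 * ‖x - (x0 - γ⁻¹ • ∑ i ∈ I, w i • g i)‖ ^ 2)
        + (⟪x0, ∑ i ∈ I, w i • g i⟫ - ‖∑ i ∈ I, w i • g i‖ ^ 2 / (2 * γ)) := by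
  set q := ∑ i ∈ I, w i • g i
  have hlin : ∑ i ∈ I, w i * (⟪x, g i⟫ + r x) = ⟪x, q⟫ + (∑ i ∈ I, w i) * r x := by
    simp only [q, inner_sum, real_inner_smul_right, Finset.sum_mul, ← Finset.sum_add_distrib,
      mul_add]
  have hsq : ‖x - (x0 - γ⁻¹ • q)‖ ^ 2
      = ‖x - x0‖ ^ 2 + 2 * γ⁻¹ * (⟪x, q⟫ - ⟪x0, q⟫) + γ⁻¹ ^ 2 * ‖q‖ ^ 2 := by
    rw [sub_sub_eq_add_sub, add_sub_right_comm, norm_add_sq_real, real_inner_smul_right,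
      inner_sub_left, norm_smul, mul_pow, Real.norm_eq_abs, sq_abs]
    ring
  rw [hlin, hsq]
  field_simp
  ring

lemma eq_of_isMinOn_prox_of_isMinOn_dualAveraging (hs : Convex ℝ s) {r : E → ℝ}
    (hr : ConvexOn ℝ s r) {ι : Type*} (I : Finset ι) {w : ι → ℝ} (hw : 0 ≤ ∑ i ∈ I, w i)
    (g : ι → E) {γ : ℝ} (hγ : 0 < γ) (x0 : E) {u v : E} (hu : u ∈ s) (hv : v ∈ s)
    (hu_min : IsMinOn (fun x => (∑ i ∈ I, w i) / γ * r x
      + 1 / 2 * ‖x - (x0 - γ⁻¹ • ∑ i ∈ I, w i • g i)‖ ^ 2) s u)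
    (hv_min : IsMinOn (fun x => ∑ i ∈ I, w i * (⟪x, g i⟫ + r x) + γ / 2 * ‖x - x0‖ ^ 2) s v) :
    u = v := by
  refine eq_of_isMinOn_add_half_mul_norm_sub_sq hs hr (div_nonneg hw hγ.le) _ hu hv hu_min ?_
  refine isMinOn_iff.2 fun x hx => le_of_mul_le_mul_left ?_ hγ
  have hvx := isMinOn_iff.1 hv_min x hx
  simp only [sum_mul_inner_add_add_half_mul_norm_sub_sq I w g r hγ.ne'] at hvx
  linarith

end Prox

lemma sum_Icc_one_eq_of_succ {a s : ℕ → ℝ} (h0 : s 0 = 0) (hs : ∀ k, s (k + 1) = s k + a (k + 1))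
    (K : ℕ) : ∑ i ∈ Finset.Icc 1 K, a i = s K := by
  induction K with
  | zero => simp [h0]
  | succ K ih => rw [Finset.sum_Icc_succ_top (by omega), ih, hs]

lemma clvr_stepSizes_nonneg_pos {a Aseq : ℕ → ℝ} {σ γ D : ℝ} (hσ : 0 ≤ σ) (hγ : 0 < γ)
    (hD : 0 < D) (hA0 : Aseq 0 = 0) (ha1 : a 1 = 1 / D)
    (harec : ∀ k, 1 ≤ k → a (k + 1) = Real.sqrt (1 + σ * Aseq k / γ) / D)
    (hArec : ∀ k, Aseq (k + 1) = Aseq k + a (k + 1)) (k : ℕ) :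
    0 ≤ Aseq k ∧ 0 < a (k + 1) := by
  induction k with
  | zero => exact ⟨hA0.ge, by rw [ha1]; positivity⟩
  | succ k ih =>
    have hA : 0 ≤ Aseq (k + 1) := by rw [hArec]; linarith [ih.2]
    refine ⟨hA, ?_⟩
    rw [harec (k + 1) (by omega)]
    have : 0 < 1 + σ * Aseq (k + 1) / γ := by positivity
    positivity

theorem clvr_implementation_analysis_equivalence_general
    (n d m : ℕ) (hm : 0 < m)
    (A : Matrix (Fin n) (Fin d) ℝ) (b : EuclideanSpace ℝ (Fin n))
    (c : EuclideanSpace ℝ (Fin d))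
    (X : Set (EuclideanSpace ℝ (Fin d)))
    (hXconv : Convex ℝ X)
    (r : EuclideanSpace ℝ (Fin d) → ℝ) (σ : ℝ) (hσ : 0 ≤ σ)
    (hrconv : ConvexOn ℝ Set.univ r)
    (S : Fin n → Fin m)
    (Lhat : ℝ) (hLhat : 0 < Lhat)
    (γ : ℝ) (hγ : 0 < γ)
    -- step sizes
    (a Aseq : ℕ → ℝ)
    (hA0 : Aseq 0 = 0)
    (ha1 : a 1 = 1 / (Real.sqrt 2 * Lhat * m))
    (harec : ∀ k, 1 ≤ k →
      a (k + 1) = Real.sqrt (1 + σ * Aseq k / γ) / (Real.sqrt 2 * Lhat * m))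
    (hArec : ∀ k, Aseq (k + 1) = Aseq k + a (k + 1))
    -- a fixed realization of the block indices (j k is the index used at iteration k)
    (j : ℕ → Fin m)
    -- common initialization
    (x0 : EuclideanSpace ℝ (Fin d)) (y0 : EuclideanSpace ℝ (Fin n))
    -- implementation-form iterates
    (xI : ℕ → EuclideanSpace ℝ (Fin d)) (yI : ℕ → EuclideanSpace ℝ (Fin n))
    (z q : ℕ → EuclideanSpace ℝ (Fin d))
    (hxI0 : xI 0 = x0) (hyI0 : yI 0 = y0)
    (hz0 : z 0 = mvT A y0)
    (hz : ∀ k, 1 ≤ k → ∀ col : Fin d,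
      z k col = z (k - 1) col
        + ∑ i ∈ Finset.univ.filter (fun i => S i = j k), A i col * (yI k i - yI (k - 1) i))
    (hq0 : q 0 = a 1 • (z 0 + c))
    (hq : ∀ k, 1 ≤ k →
      q k = q (k - 1) + a (k + 1) • (z k + c) + ((m : ℝ) * a k) • (z k - z (k - 1)))
    (hxImin : ∀ k, 1 ≤ k → xI k ∈ X ∧ ∀ x' ∈ X,
      Aseq k / γ * r (xI k) + 1 / 2 * ‖xI k - (x0 - γ⁻¹ • q (k - 1))‖ ^ 2
        ≤ Aseq k / γ * r x' + 1 / 2 * ‖x' - (x0 - γ⁻¹ • q (k - 1))‖ ^ 2)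
    (hyIupd : ∀ k, 1 ≤ k → ∀ i : Fin n,
      yI k i = if S i = j k
        then yI (k - 1) i + γ * m * a k * (mv A (xI k) i - b i)
        else yI (k - 1) i)
    -- analysis-form iterates
    (xA : ℕ → EuclideanSpace ℝ (Fin d)) (yA ybar : ℕ → EuclideanSpace ℝ (Fin n))
    (hxA0 : xA 0 = x0) (hyA0 : yA 0 = y0) (hybar0 : ybar 0 = y0)
    (hxAmin : ∀ k, 1 ≤ k → xA k ∈ X ∧ ∀ x' ∈ X,
      ((∑ i ∈ Finset.Icc 1 k, a i * (⟪xA k, mvT A (ybar (i - 1)) + c⟫ + r (xA k)))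
          + γ / 2 * ‖xA k - x0‖ ^ 2)
        ≤ ((∑ i ∈ Finset.Icc 1 k, a i * (⟪x', mvT A (ybar (i - 1)) + c⟫ + r x'))
          + γ / 2 * ‖x' - x0‖ ^ 2))
    (hyAupd : ∀ k, 1 ≤ k → ∀ i : Fin n,
      yA k i = if S i = j k
        then yA (k - 1) i + γ * m * a k * (mv A (xA k) i - b i)
        else yA (k - 1) i)
    (hybar : ∀ k, 1 ≤ k →
      ybar k = yA k + (m * a k / a (k + 1)) • (yA k - yA (k - 1))) :
    ∀ k : ℕ, xI k = xA k ∧ yI k = yA k := by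
  have hD : 0 < Real.sqrt 2 * Lhat * m := by positivity
  have hsteps := clvr_stepSizes_nonneg_pos hσ hγ hD hA0 ha1 harec hArec
  have hAsum := sum_Icc_one_eq_of_succ hA0 hArec
  suffices H : ∀ k, (xI k = xA k ∧ yI k = yA k) ∧ z k = mvT A (yI k) ∧
      q k = ∑ i ∈ Finset.Icc 1 (k + 1), a i • (mvT A (ybar (i - 1)) + c) by
    exact fun k => (H k).1
  intro k
  induction k with
  | zero =>
    exact ⟨⟨hxI0.trans hxA0.symm, hyI0.trans hyA0.symm⟩, by rw [hz0, hyI0],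
      by simp [hq0, hz0, hybar0]⟩
  | succ k ih =>
    obtain ⟨⟨-, hy⟩, hzk, hqk⟩ := ih
    have hk : 1 ≤ k + 1 := by omega
    obtain ⟨hxIX, hxImin⟩ := hxImin (k + 1) hk
    obtain ⟨hxAX, hxAmin⟩ := hxAmin (k + 1) hk
    rw [Nat.add_sub_cancel, hqk, ← hAsum] at hxImin
    have hxK : xI (k + 1) = xA (k + 1) :=
      eq_of_isMinOn_prox_of_isMinOn_dualAveraging hXconv
        (hrconv.subset (Set.subset_univ X) hXconv) _ (by rw [hAsum]; exact (hsteps (k + 1)).1)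
        (fun i => mvT A (ybar (i - 1)) + c) hγ x0 hxIX hxAX
        (isMinOn_iff.2 hxImin) (isMinOn_iff.2 hxAmin)
    have hyK : yI (k + 1) = yA (k + 1) := by
      ext i
      rw [hyIupd _ hk, hyAupd _ hk, Nat.add_sub_cancel, hy, hxK]
    have hzK : z (k + 1) = mvT A (yI (k + 1)) := by
      ext col
      rw [hz _ hk, Nat.add_sub_cancel, hzk,
        mvT_apply_eq_add_sum_filter A (S · = j (k + 1)) (y := yI k) (y' := yI (k + 1))
          fun i hi => ?_]
      rw [hyIupd _ hk, if_neg hi, Nat.add_sub_cancel]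
    refine ⟨⟨hxK, hyK⟩, hzK, ?_⟩
    have ha : a (k + 2) ≠ 0 := (hsteps (k + 1)).2.ne'
    rw [Finset.sum_Icc_succ_top (by omega), ← hqk, hq _ hk]
    simp only [Nat.add_sub_cancel]
    rw [hybar _ hk, Nat.add_sub_cancel, mvT_add, mvT_smul, mvT_sub, ← hyK, ← hy, ← hzK, ← hzk,
      add_assoc, smul_add, smul_add, smul_add, smul_smul, mul_div_cancel₀ _ ha]
    abel

/-- Proposition 1 (equivalence of the implementation and analysis forms of CLVR):
for any fixed realization of the block indices and common initialization, the iterates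
of the implementation form (maintaining `z_k`, `q_k` and a proximal step) coincide with
the iterates of the analysis form (dual averaging against extrapolated duals `ȳ`). -/
theorem clvr_implementation_analysis_equivalence
    (n d m : ℕ) (hm : 0 < m)
    (A : Matrix (Fin n) (Fin d) ℝ) (b : EuclideanSpace ℝ (Fin n))
    (c : EuclideanSpace ℝ (Fin d))
    (X : Set (EuclideanSpace ℝ (Fin d)))
    (hXne : X.Nonempty) (hXc : IsClosed X) (hXconv : Convex ℝ X)
    (r : EuclideanSpace ℝ (Fin d) → ℝ) (σ : ℝ) (hσ : 0 ≤ σ)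
    (hrconv : ConvexOn ℝ Set.univ r) (hrstrong : StrongConvexOn X σ r)
    (S : Fin n → Fin m) (hS : Function.Surjective S)
    (Lhat : ℝ) (hLhat : 0 < Lhat)
    (γ : ℝ) (hγ : 0 < γ)
    -- step sizes
    (a Aseq : ℕ → ℝ)
    (ha0 : a 0 = 0) (hA0 : Aseq 0 = 0)
    (ha1 : a 1 = 1 / (Real.sqrt 2 * Lhat * m))
    (harec : ∀ k, 1 ≤ k →
      a (k + 1) = Real.sqrt (1 + σ * Aseq k / γ) / (Real.sqrt 2 * Lhat * m))
    (hArec : ∀ k, Aseq (k + 1) = Aseq k + a (k + 1))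
    -- a fixed realization of the block indices (j k is the index used at iteration k)
    (j : ℕ → Fin m)
    -- common initialization
    (x0 : EuclideanSpace ℝ (Fin d)) (y0 : EuclideanSpace ℝ (Fin n)) (hx0X : x0 ∈ X)
    -- implementation-form iterates
    (xI : ℕ → EuclideanSpace ℝ (Fin d)) (yI : ℕ → EuclideanSpace ℝ (Fin n))
    (z q : ℕ → EuclideanSpace ℝ (Fin d))
    (hxI0 : xI 0 = x0) (hyI0 : yI 0 = y0)
    (hz0 : z 0 = mvT A y0)
    (hz : ∀ k, 1 ≤ k → ∀ col : Fin d,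
      z k col = z (k - 1) col
        + ∑ i ∈ Finset.univ.filter (fun i => S i = j k), A i col * (yI k i - yI (k - 1) i))
    (hq0 : q 0 = a 1 • (z 0 + c))
    (hq : ∀ k, 1 ≤ k →
      q k = q (k - 1) + a (k + 1) • (z k + c) + ((m : ℝ) * a k) • (z k - z (k - 1)))
    (hxImin : ∀ k, 1 ≤ k → xI k ∈ X ∧ ∀ x' ∈ X,
      Aseq k / γ * r (xI k) + 1 / 2 * ‖xI k - (x0 - γ⁻¹ • q (k - 1))‖ ^ 2
        ≤ Aseq k / γ * r x' + 1 / 2 * ‖x' - (x0 - γ⁻¹ • q (k - 1))‖ ^ 2)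
    (hyIupd : ∀ k, 1 ≤ k → ∀ i : Fin n,
      yI k i = if S i = j k
        then yI (k - 1) i + γ * m * a k * (mv A (xI k) i - b i)
        else yI (k - 1) i)
    -- analysis-form iterates
    (xA : ℕ → EuclideanSpace ℝ (Fin d)) (yA ybar : ℕ → EuclideanSpace ℝ (Fin n))
    (hxA0 : xA 0 = x0) (hyA0 : yA 0 = y0) (hybar0 : ybar 0 = y0)
    (hxAmin : ∀ k, 1 ≤ k → xA k ∈ X ∧ ∀ x' ∈ X,
      ((∑ i ∈ Finset.Icc 1 k, a i * (⟪xA k, mvT A (ybar (i - 1)) + c⟫ + r (xA k)))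
          + γ / 2 * ‖xA k - x0‖ ^ 2)
        ≤ ((∑ i ∈ Finset.Icc 1 k, a i * (⟪x', mvT A (ybar (i - 1)) + c⟫ + r x'))
          + γ / 2 * ‖x' - x0‖ ^ 2))
    (hyAupd : ∀ k, 1 ≤ k → ∀ i : Fin n,
      yA k i = if S i = j k
        then yA (k - 1) i + γ * m * a k * (mv A (xA k) i - b i)
        else yA (k - 1) i)
    (hybar : ∀ k, 1 ≤ k →
      ybar k = yA k + (m * a k / a (k + 1)) • (yA k - yA (k - 1))) :
    ∀ k : ℕ, xI k = xA k ∧ yI k = yA k :=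
  clvr_implementation_analysis_equivalence_general n d m hm A b c X hXconv r σ hσ hrconv S Lhat
    hLhat γ hγ a Aseq hA0 ha1 harec hArec j x0 y0 xI yI z q hxI0 hyI0 hz0 hz hq0 hq hxImin hyIupd xA
    yA ybar hxA0 hyA0 hybar0 hxAmin hyAupd hybar
end

section
/- Let {A_k}_{k≥0} be a sequence of nonnegative real numbers with A₀ = 0 and A_k = A_{k−1} + √(c₁² + c₂ A_{k−1}) for k ≥ 1, where c₁ > 0 and c₂ ≥ 0. Let K₀ = ⌈c₂/(9c₁)⌉. Then A_k ≥ (c₂/9)·(k − K₀ + max{3√(c₁/c₂), 1})² whenever c₂ > 0 and k > K₀, and A_k ≥ c₁ k in all other cases. -/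
/-- Growth lemma for the estimate-sequence coefficients (Lemma from Song et al. 2021):
with `A_0 = 0` and `A_k = A_{k-1} + √(c₁² + c₂ A_{k-1})`, setting `K₀ = ⌈c₂/(9c₁)⌉` one has
`A_k ≥ (c₂/9)(k − K₀ + max{3√(c₁/c₂), 1})²` when `c₂ > 0` and `k > K₀`,
and `A_k ≥ c₁ k` in all other cases. -/
theorem es_seq_growth
    (c1 c2 : ℝ) (hc1 : 0 < c1) (hc2 : 0 ≤ c2)
    (Aseq : ℕ → ℝ) (hpos : ∀ k, 0 ≤ Aseq k)
    (hA0 : Aseq 0 = 0)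
    (hrec : ∀ k, 1 ≤ k → Aseq k = Aseq (k - 1) + Real.sqrt (c1 ^ 2 + c2 * Aseq (k - 1)))
    (K0 : ℕ) (hK0 : K0 = ⌈c2 / (9 * c1)⌉₊) :
    ∀ k : ℕ,
      (0 < c2 → K0 < k →
        c2 / 9 * ((k : ℝ) - K0 + max (3 * Real.sqrt (c1 / c2)) 1) ^ 2 ≤ Aseq k) ∧
      (¬ (0 < c2 ∧ K0 < k) → c1 * k ≤ Aseq k) := by
  have hlin : ∀ k : ℕ, c1 * k ≤ Aseq k := by
    intro k
    induction k with
    | zero => simp [hA0]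
    | succ n ih =>
      have h := hrec (n + 1) (by omega)
      simp only [Nat.add_sub_cancel] at h
      have hs : c1 ≤ Real.sqrt (c1 ^ 2 + c2 * Aseq n) :=
        calc c1 = Real.sqrt (c1 ^ 2) := (Real.sqrt_sq hc1.le).symm
          _ ≤ _ := Real.sqrt_le_sqrt (by nlinarith [mul_nonneg hc2 (hpos n)])
      push_cast
      rw [h]
      nlinarith
  intro k
  refine ⟨?_, fun _ => hlin k⟩
  intro hc2p hk
  set M := max (3 * Real.sqrt (c1 / c2)) 1 with hMdef
  have hM1 : (1 : ℝ) ≤ M := le_max_right _ _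
  have hK1 : 1 ≤ K0 := by
    rw [hK0]
    exact Nat.one_le_iff_ne_zero.mpr (Nat.ceil_pos.mpr (by positivity)).ne'
  have key : ∀ n : ℕ, c2 / 9 * (((K0 + n : ℕ) : ℝ) - K0 + M) ^ 2 ≤ Aseq (K0 + n) := by
    intro n
    induction n with
    | zero =>
      have hbase : c2 / 9 * M ^ 2 ≤ c1 * (K0 : ℝ) := by
        rcases le_total (3 * Real.sqrt (c1 / c2)) 1 with h | h
        · rw [hMdef, max_eq_right h]
          have hceil : c2 / (9 * c1) ≤ (K0 : ℝ) := hK0 ▸ Nat.le_ceil _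
          rw [div_le_iff₀ (by positivity : (0:ℝ) < 9 * c1)] at hceil
          nlinarith
        · rw [hMdef, max_eq_left h]
          have hsq : (3 * Real.sqrt (c1 / c2)) ^ 2 = 9 * (c1 / c2) := by
            rw [mul_pow, Real.sq_sqrt (by positivity)]; ring
          rw [hsq]
          have h9 : c2 / 9 * (9 * (c1 / c2)) = c1 := by field_simp
          rw [h9]
          have : (1 : ℝ) ≤ (K0 : ℝ) := by exact_mod_cast hK1
          nlinarith
      have hl := hlin K0
      simp only [Nat.add_zero]
      have : ((K0 : ℕ) : ℝ) - K0 + M = M := by ring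
      rw [this]
      linarith
    | succ n ih =>
      set m := K0 + n with hm
      have hrecm := hrec (m + 1) (by omega)
      simp only [Nat.add_sub_cancel] at hrecm
      set t : ℝ := ((m : ℕ) : ℝ) - K0 + M with ht
      have ht1 : (1 : ℝ) ≤ t := by
        have : (K0 : ℝ) ≤ (m : ℝ) := by push_cast [hm]; linarith [show (0:ℝ) ≤ (n:ℝ) from Nat.cast_nonneg n]
        simp only [ht]; linarith
      have hAk : c2 / 9 * t ^ 2 ≤ Aseq m := ih
      have hq : Real.sqrt (c2 * (c2 / 9 * t ^ 2)) ≤ Real.sqrt (c1 ^ 2 + c2 * Aseq m) := by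
        apply Real.sqrt_le_sqrt
        nlinarith [mul_le_mul_of_nonneg_left hAk hc2p.le, sq_nonneg c1]
      have hval : Real.sqrt (c2 * (c2 / 9 * t ^ 2)) = c2 * t / 3 := by
        rw [show c2 * (c2 / 9 * t ^ 2) = (c2 * t / 3) ^ 2 by ring]
        exact Real.sqrt_sq (by positivity)
      rw [hval] at hq
      have hgoal : ((m + 1 : ℕ) : ℝ) - K0 + M = t + 1 := by
        push_cast; rw [ht]; ring
      rw [show K0 + (n + 1) = m + 1 from rfl, hrecm, hgoal]
      nlinarith
  have hnk : K0 + (k - K0) = k := by omega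
  have := key (k - K0)
  rwa [hnk] at this
end
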